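/- arXiv:1506.05876 — 7 statements merged into one kernel-verified Lean document; each statement's English description precedes it below -/
import Mathlib

section
/- Let w, x, y ∈ X with (w,x) ∈ Γ_φ and (x,y) ∈ Γ_φ. Let γ₋ : [−d(w,x), 0] → X satisfy γ₋(−d(w,x)) = w, γ₋(0) = x and d(γ₋(s), γ₋(t)) = t − s for all s ≤ t in its domain, and let γ₊ : [0, d(x,y)] → X satisfy γ₊(0) = x, γ₊(d(x,y)) = y and d(γ₊(s), γ₊(t)) = t − s for all s ≤ t in its domain. Define the concatenation γ : [−d(w,x), d(x,y)] → X by γ := γ₋ on [−d(w,x),0] and γ := γ₊ on [0, d(x,y)]. Then φ(γ(t)) − φ(γ(s)) = t − s for all s ≤ t in [−d(w,x), d(x,y)]; in particular d(γ(s), γ(t)) = t − s for all such s ≤ t (so γ is a unit-speed minimal geodesic from w to y) and (γ(s), γ(t)) ∈ Γ_φ for all s ≤ t. -/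
/-!
Along each piece `φ` grows exactly at unit speed: it grows at most at unit speed on every
subsegment by the Lipschitz bound, and the total growth equals the length because the endpoints
lie in `Γ_φ`. Hence `φ ∘ γ` is `t ↦ φ x + t` on the whole interval. The triangle inequality through
`x` gives `d (γ s) (γ t) ≤ t - s`, and the Lipschitz bound gives the reverse inequality.
-/

section

variable {X : Type*} (d : X → X → ℝ)

theorem comp_eq_add_of_unitSpeed (φ : X → ℝ) (hφ : ∀ x y, φ y - φ x ≤ d x y)
    {c : ℝ → X} {a b : ℝ} (hc : ∀ s t, a ≤ s → s ≤ t → t ≤ b → d (c s) (c t) = t - s)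
    (hab : φ (c b) - φ (c a) = b - a) {u : ℝ} (hau : a ≤ u) (hub : u ≤ b) :
    φ (c u) = φ (c a) + (u - a) := by
  have hleft := hφ (c a) (c u)
  have hright := hφ (c u) (c b)
  rw [hc a u le_rfl hau hub] at hleft
  rw [hc u b hau hub le_rfl] at hright
  linarith

theorem dist_piecewise_le (hd_tri : ∀ x y z, d x y ≤ d x z + d z y)
    {γm γp γ : ℝ → X} (h0 : γm 0 = γp 0) {a b : ℝ}
    (hm : ∀ s t, a ≤ s → s ≤ t → t ≤ 0 → d (γm s) (γm t) ≤ t - s)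
    (hp : ∀ s t, 0 ≤ s → s ≤ t → t ≤ b → d (γp s) (γp t) ≤ t - s)
    (hγ : ∀ t, γ t = if t ≤ 0 then γm t else γp t)
    {s t : ℝ} (hs : a ≤ s) (hst : s ≤ t) (ht : t ≤ b) :
    d (γ s) (γ t) ≤ t - s := by
  rw [hγ s, hγ t]
  by_cases hs0 : s ≤ 0 <;> by_cases ht0 : t ≤ 0
  · simpa only [hs0, ht0, if_true] using hm s t hs hst ht0
  · have hleft := hm s 0 hs hs0 le_rfl
    have hright := hp 0 t le_rfl (le_of_not_ge ht0) ht
    have htri := hd_tri (γm s) (γp t) (γp 0)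
    rw [h0] at hleft
    simp only [hs0, ht0, if_true, if_false]
    linarith
  · exact absurd (hst.trans ht0) hs0
  · simpa only [hs0, ht0, if_false] using hp s t (le_of_not_ge hs0) hst ht

end

theorem stmt_1_general {X : Type*} (d : X → X → ℝ)
    (hd_tri : ∀ x y z, d x y ≤ d x z + d z y)
    (φ : X → ℝ) (hφ : ∀ x y, φ y - φ x ≤ d x y)
    (w x y : X)
    (hwx : φ x - φ w = d w x) (hxy : φ y - φ x = d x y)
    (γm γp γ : ℝ → X)
    (hγm_w : γm (-(d w x)) = w) (hγm_x : γm 0 = x)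
    (hγm : ∀ s t : ℝ, -(d w x) ≤ s → s ≤ t → t ≤ 0 → d (γm s) (γm t) = t - s)
    (hγp_x : γp 0 = x) (hγp_y : γp (d x y) = y)
    (hγp : ∀ s t : ℝ, 0 ≤ s → s ≤ t → t ≤ d x y → d (γp s) (γp t) = t - s)
    (hγ : ∀ t : ℝ, γ t = if t ≤ 0 then γm t else γp t) :
    ∀ s t : ℝ, -(d w x) ≤ s → s ≤ t → t ≤ d x y →
      φ (γ t) - φ (γ s) = t - s ∧
      d (γ s) (γ t) = t - s ∧
      φ (γ t) - φ (γ s) = d (γ s) (γ t) := by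
  intro s t hs hst ht
  have hφm : ∀ u, -(d w x) ≤ u → u ≤ 0 → φ (γm u) = φ x + u := fun u h1 h2 => by
    have := comp_eq_add_of_unitSpeed d φ hφ hγm (by rw [hγm_w, hγm_x]; linarith) h1 h2
    rw [hγm_w] at this
    linarith
  have hφp : ∀ u, 0 ≤ u → u ≤ d x y → φ (γp u) = φ x + u := fun u h1 h2 => by
    have := comp_eq_add_of_unitSpeed d φ hφ hγp (by rw [hγp_y, hγp_x]; linarith) h1 h2
    rw [hγp_x] at this
    linarith
  have hφγ : ∀ u, -(d w x) ≤ u → u ≤ d x y → φ (γ u) = φ x + u := fun u h1 h2 => by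
    rw [hγ u]
    split_ifs with hu
    exacts [hφm u h1 hu, hφp u (le_of_not_ge hu) h2]
  have hφst : φ (γ t) - φ (γ s) = t - s := by
    rw [hφγ s hs (hst.trans ht), hφγ t (hs.trans hst) ht]
    ring
  have hdle : d (γ s) (γ t) ≤ t - s :=
    dist_piecewise_le d hd_tri (hγm_x.trans hγp_x.symm)
      (fun s t h1 h2 h3 => (hγm s t h1 h2 h3).le) (fun s t h1 h2 h3 => (hγp s t h1 h2 h3).le)
      hγ hs hst ht
  have hdge := hφ (γ s) (γ t)
  exact ⟨hφst, by linarith, by linarith⟩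

/-- Concatenation of two unit-speed minimal geodesics, from `w` to `x` and from `x` to `y`,
where `(w,x)` and `(x,y)` belong to `Γ_φ`, is again a unit-speed minimal geodesic along which
`φ` increases with unit speed; in particular all its ordered pairs belong to `Γ_φ`. -/
theorem stmt_1 {X : Type*} (d : X → X → ℝ)
    (hd_nonneg : ∀ x y, 0 ≤ d x y)
    (hd_refl : ∀ x, d x x = 0)
    (hd_tri : ∀ x y z, d x y ≤ d x z + d z y)
    (φ : X → ℝ) (hφ : ∀ x y, φ y - φ x ≤ d x y)
    (w x y : X)
    (hwx : φ x - φ w = d w x) (hxy : φ y - φ x = d x y)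
    (γm γp γ : ℝ → X)
    (hγm_w : γm (-(d w x)) = w) (hγm_x : γm 0 = x)
    (hγm : ∀ s t : ℝ, -(d w x) ≤ s → s ≤ t → t ≤ 0 → d (γm s) (γm t) = t - s)
    (hγp_x : γp 0 = x) (hγp_y : γp (d x y) = y)
    (hγp : ∀ s t : ℝ, 0 ≤ s → s ≤ t → t ≤ d x y → d (γp s) (γp t) = t - s)
    (hγ : ∀ t : ℝ, γ t = if t ≤ 0 then γm t else γp t) :
    ∀ s t : ℝ, -(d w x) ≤ s → s ≤ t → t ≤ d x y →
      φ (γ t) - φ (γ s) = t - s ∧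
      d (γ s) (γ t) = t - s ∧
      φ (γ t) - φ (γ s) = d (γ s) (γ t) :=
  stmt_1_general d hd_tri φ hφ w x y hwx hxy γm γp γ hγm_w hγm_x hγm hγp_x hγp_y hγp hγ
end

section
/- The set M_φ := {x ∈ X : there exist w ≠ x and y ≠ x with (w,x) ∈ Γ_φ and (x,y) ∈ Γ_φ} is σ-compact. -/
/-!
Two-sided bounds `φ x - d y x ≤ φ y ≤ φ x + d x y` make `φ` continuous, so the triples
`(w, x, y)` with `(w, x), (x, y) ∈ Γ_φ` form a closed subset of the σ-compact space `X³`.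
Non-degeneracy `w ≠ x ≠ y` means `0 < min (d w x) (d x y)`, an open condition exhausted by the
closed conditions `1 / (n + 1) ≤ min (d w x) (d x y)`; hence the non-degenerate triples form
a σ-compact set, and `M_φ` is its image under the continuous middle projection.
-/

open Set Filter Topology

theorem IsClosed.isSigmaCompact {Y : Type*} [TopologicalSpace Y] [SigmaCompactSpace Y]
    {s : Set Y} (hs : IsClosed s) : IsSigmaCompact s :=
  isSigmaCompact_univ.of_isClosed_subset hs (subset_univ s)

theorem IsClosed.isSigmaCompact_inter_setOf_pos {Y : Type*} [TopologicalSpace Y]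
    [SigmaCompactSpace Y] {F : Set Y} (hF : IsClosed F) {f : Y → ℝ} (hf : Continuous f) :
    IsSigmaCompact (F ∩ {y | 0 < f y}) := by
  have hcover : F ∩ {y | 0 < f y} = ⋃ n : ℕ, F ∩ {y | 1 / ((n : ℝ) + 1) ≤ f y} := by
    ext y
    simp only [mem_inter_iff, mem_ofPred_eq, mem_iUnion]
    constructor
    · rintro ⟨hy, hpos⟩
      obtain ⟨n, hn⟩ := exists_nat_one_div_lt hpos
      exact ⟨n, hy, hn.le⟩
    · rintro ⟨n, hy, hn⟩
      exact ⟨hy, lt_of_lt_of_le (by positivity) hn⟩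
  rw [hcover]
  exact isSigmaCompact_iUnion _ fun n =>
    (hF.inter (_root_.isClosed_le continuous_const hf)).isSigmaCompact

section AsymmetricDistance

variable {X : Type*} {d : X → X → ℝ} {φ : X → ℝ}

theorem pos_iff_ne_of_dist (hd_nonneg : ∀ x y, 0 ≤ d x y) (hd_refl : ∀ x, d x x = 0)
    (hd_pos : ∀ x y, d x y = 0 → x = y) {x y : X} : 0 < d x y ↔ x ≠ y := by
  refine ⟨fun h hxy => ?_, fun hxy => (hd_nonneg x y).lt_of_ne fun h => hxy (hd_pos x y h.symm)⟩
  rw [hxy, hd_refl] at h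
  exact lt_irrefl 0 h

variable [TopologicalSpace X]

/-- The set `Γ_φ`. -/
def tightPairs (d : X → X → ℝ) (φ : X → ℝ) : Set (X × X) :=
  {p | φ p.2 - φ p.1 = d p.1 p.2}

theorem continuous_of_forall_sub_le (hd_refl : ∀ x, d x x = 0)
    (hd_cont : Continuous fun p : X × X => d p.1 p.2) (hφ : ∀ x y, φ y - φ x ≤ d x y) :
    Continuous φ := by
  refine continuous_iff_continuousAt.2 fun x => ?_
  have hleft : Tendsto (fun y => φ x - d y x) (𝓝 x) (𝓝 (φ x)) := by
    simpa [hd_refl] using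
      ((hd_cont.comp (Continuous.prodMk_left x)).tendsto x).const_sub (φ x)
  have hright : Tendsto (fun y => φ x + d x y) (𝓝 x) (𝓝 (φ x)) := by
    simpa [hd_refl] using
      ((hd_cont.comp (Continuous.prodMk_right x)).tendsto x).const_add (φ x)
  exact tendsto_of_tendsto_of_tendsto_of_le_of_le hleft hright
    (fun y => by linarith [hφ y x]) (fun y => by linarith [hφ x y])

theorem isClosed_tightPairs (hd_cont : Continuous fun p : X × X => d p.1 p.2)
    (hφ : Continuous φ) : IsClosed (tightPairs d φ) :=
  isClosed_eq ((hφ.comp continuous_snd).sub (hφ.comp continuous_fst)) hd_cont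

end AsymmetricDistance

theorem stmt_2_general {X : Type*} [TopologicalSpace X]
    [SigmaCompactSpace X]
    (d : X → X → ℝ)
    (hd_nonneg : ∀ x y, 0 ≤ d x y)
    (hd_refl : ∀ x, d x x = 0)
    (hd_cont : Continuous fun p : X × X => d p.1 p.2)
    (hd_pos : ∀ x y, d x y = 0 → x = y)
    (φ : X → ℝ) (hφ : ∀ x y, φ y - φ x ≤ d x y) :
    IsSigmaCompact {x : X | ∃ w y : X, w ≠ x ∧ y ≠ x ∧
      φ x - φ w = d w x ∧ φ y - φ x = d x y} := by
  have hΓ := isClosed_tightPairs hd_cont (continuous_of_forall_sub_le hd_refl hd_cont hφ)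
  have hchains : IsClosed {q : X × X × X | (q.1, q.2.1) ∈ tightPairs d φ ∧
      (q.2.1, q.2.2) ∈ tightPairs d φ} :=
    (hΓ.preimage (continuous_fst.prodMk continuous_snd.fst)).inter
      (hΓ.preimage continuous_snd)
  have hstep : Continuous fun q : X × X × X => min (d q.1 q.2.1) (d q.2.1 q.2.2) :=
    (hd_cont.comp (continuous_fst.prodMk continuous_snd.fst)).min (hd_cont.comp continuous_snd)
  convert ((hchains.isSigmaCompact_inter_setOf_pos hstep).image continuous_snd.fst) using 1
  ext x
  simp only [tightPairs, mem_ofPred_eq, mem_image, mem_inter_iff, lt_min_iff,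
    pos_iff_ne_of_dist hd_nonneg hd_refl hd_pos, Prod.exists]
  constructor
  · rintro ⟨w, y, hw, hy, hwx, hxy⟩
    exact ⟨w, x, y, ⟨⟨hwx, hxy⟩, hw, Ne.symm hy⟩, rfl⟩
  · rintro ⟨w, x, y, ⟨⟨hwx, hxy⟩, hw, hy⟩, rfl⟩
    exact ⟨w, y, hw, Ne.symm hy, hwx, hxy⟩

/-- The set `M_φ` of points lying in the (relative) interior of some non-degenerate
transport ray, i.e. admitting `w ≠ x` and `y ≠ x` with `(w,x), (x,y) ∈ Γ_φ`,
is σ-compact. -/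
theorem stmt_2 {X : Type*} [TopologicalSpace X] [TopologicalSpace.MetrizableSpace X]
    [SigmaCompactSpace X]
    (d : X → X → ℝ)
    (hd_nonneg : ∀ x y, 0 ≤ d x y)
    (hd_refl : ∀ x, d x x = 0)
    (hd_tri : ∀ x y z, d x y ≤ d x z + d z y)
    (hd_cont : Continuous fun p : X × X => d p.1 p.2)
    (hd_pos : ∀ x y, d x y = 0 → x = y)
    (φ : X → ℝ) (hφ : ∀ x y, φ y - φ x ≤ d x y) :
    IsSigmaCompact {x : X | ∃ w y : X, w ≠ x ∧ y ≠ x ∧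
      φ x - φ w = d w x ∧ φ y - φ x = d x y} :=
  stmt_2_general d hd_nonneg hd_refl hd_cont hd_pos φ hφ
end

section
/- The set {x ∈ X : there exists y ≠ x with (x,y) ∈ Γ_φ or (y,x) ∈ Γ_φ} (the union of all non-degenerate transport rays, i.e. the set T_φ ⊔ B_φ of the paper) is σ-compact. -/
/-!
Since `φ` is squeezed between `φ x - d y x` and `φ x + d x y`, it is continuous, so the set of
pairs `(x, y)` with `(x, y) ∈ Γ_φ` or `(y, x) ∈ Γ_φ` is closed in `X × X`. Off the diagonal, which
is open, this is the intersection of a closed set with an open set of the σ-compact metrizable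
space `X × X`, hence σ-compact; the set in question is its first projection.
-/

open Set Filter Topology

theorem IsOpen.isSigmaCompact {X : Type*} [TopologicalSpace X]
    [TopologicalSpace.PseudoMetrizableSpace X] [SigmaCompactSpace X] {U : Set X}
    (hU : IsOpen U) : IsSigmaCompact U := by
  let _ := TopologicalSpace.pseudoMetrizableSpacePseudoMetric X
  obtain ⟨F, hF_closed, -, hF_union, -⟩ := hU.exists_iUnion_isClosed
  rw [← hF_union]
  exact isSigmaCompact_iUnion F fun n =>
    isSigmaCompact_univ.of_isClosed_subset (hF_closed n) (subset_univ _)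

theorem IsSigmaCompact.inter_isClosed {X : Type*} [TopologicalSpace X] {s t : Set X}
    (hs : IsSigmaCompact s) (ht : IsClosed t) : IsSigmaCompact (s ∩ t) := by
  obtain ⟨K, hK_compact, hK_union⟩ := hs
  refine ⟨fun n => K n ∩ t, fun n => (hK_compact n).inter_right ht, ?_⟩
  rw [← iUnion_inter, hK_union]

theorem continuous_of_sub_le_of_continuous {X : Type*} [TopologicalSpace X] {d : X → X → ℝ}
    (hd_cont : Continuous fun p : X × X => d p.1 p.2) (hd_refl : ∀ x, d x x = 0)
    {φ : X → ℝ} (hφ : ∀ x y, φ y - φ x ≤ d x y) : Continuous φ := by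
  refine continuous_iff_continuousAt.2 fun x => ?_
  have h_lower : Tendsto (fun y => φ x - d y x) (𝓝 x) (𝓝 (φ x)) :=
    (continuous_const.sub (hd_cont.comp (continuous_id.prodMk continuous_const))).tendsto' x _
      (by simp [hd_refl])
  have h_upper : Tendsto (fun y => φ x + d x y) (𝓝 x) (𝓝 (φ x)) :=
    (continuous_const.add (hd_cont.comp (continuous_const.prodMk continuous_id))).tendsto' x _
      (by simp [hd_refl])
  exact tendsto_of_tendsto_of_tendsto_of_le_of_le h_lower h_upper
    (fun y => by linarith [hφ y x]) (fun y => by linarith [hφ x y])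

theorem stmt_3_general {X : Type*} [TopologicalSpace X] [TopologicalSpace.MetrizableSpace X]
    [SigmaCompactSpace X]
    (d : X → X → ℝ)
    (hd_refl : ∀ x, d x x = 0)
    (hd_cont : Continuous fun p : X × X => d p.1 p.2)
    (φ : X → ℝ) (hφ : ∀ x y, φ y - φ x ≤ d x y) :
    IsSigmaCompact {x : X | ∃ y : X, y ≠ x ∧
      (φ y - φ x = d x y ∨ φ x - φ y = d y x)} := by
  have hφ_cont : Continuous φ := continuous_of_sub_le_of_continuous hd_cont hd_refl hφ
  set Γ : Set (X × X) := {p | φ p.2 - φ p.1 = d p.1 p.2 ∨ φ p.1 - φ p.2 = d p.2 p.1}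
  have hΓ : IsClosed Γ :=
    (isClosed_eq (by fun_prop) hd_cont).union
      (isClosed_eq (by fun_prop) (hd_cont.comp continuous_swap))
  have h_eq : {x : X | ∃ y : X, y ≠ x ∧ (φ y - φ x = d x y ∨ φ x - φ y = d y x)}
      = Prod.fst '' ({p : X × X | p.1 ≠ p.2} ∩ Γ) := by
    ext x
    simp [Γ, ne_comm]
  rw [h_eq]
  exact ((isOpen_ne_fun continuous_fst continuous_snd).isSigmaCompact.inter_isClosed hΓ).image
    continuous_fst

/-- The union of all non-degenerate transport rays, i.e. the set
`T_φ ⊔ B_φ = {x : ∃ y ≠ x, (x,y) ∈ Γ_φ or (y,x) ∈ Γ_φ}`, is σ-compact. -/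
theorem stmt_3 {X : Type*} [TopologicalSpace X] [TopologicalSpace.MetrizableSpace X]
    [SigmaCompactSpace X]
    (d : X → X → ℝ)
    (hd_nonneg : ∀ x y, 0 ≤ d x y)
    (hd_refl : ∀ x, d x x = 0)
    (hd_tri : ∀ x y z, d x y ≤ d x z + d z y)
    (hd_cont : Continuous fun p : X × X => d p.1 p.2)
    (hd_pos : ∀ x y, d x y = 0 → x = y)
    (φ : X → ℝ) (hφ : ∀ x y, φ y - φ x ≤ d x y) :
    IsSigmaCompact {x : X | ∃ y : X, y ≠ x ∧
      (φ y - φ x = d x y ∨ φ x - φ y = d y x)} :=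
  stmt_3_general d hd_refl hd_cont φ hφ
end

section
/- Let f ∈ L¹(X, m) satisfy ∫_X f dm = 0 and ∫_X |f(x)| (d(x₀,x) + d(x,x₀)) dm(x) < ∞ for some x₀ ∈ X. Then for every 1-Lipschitz function ψ : X → ℝ the integral ∫_X f ψ dm converges absolutely, the supremum of ∫_X f ψ dm over all 1-Lipschitz ψ is finite, and there exists a 1-Lipschitz function φ : X → ℝ attaining this supremum. -/
open MeasureTheory Filter Topology

/-!
Normalising a 1-Lipschitz `ψ` by `ψ x₀` leaves `∫ f ψ dm` unchanged (as `∫ f dm = 0`) and gives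
`|ψ x - ψ x₀| ≤ d(x₀,x) + d(x,x₀)`, so `|f| (d(x₀,·) + d(·,x₀))` dominates every normalised
integrand. This gives integrability and the bound on the supremum. For the maximiser, the normalised
functions of a maximising sequence are 1-Lipschitz for `ρ` and pointwise bounded. Sequential
compactness of a countable product of compact sets gives a subsequence converging on a countable
dense set, and equicontinuity spreads the convergence to every point. The limit is again
1-Lipschitz and, by dominated convergence, attains the supremum.
-/

section PointwiseCompactness

variable {X Y : Type*} [TopologicalSpace X] [PseudoMetricSpace Y]

theorem EquicontinuousAt.cauchySeq_of_dense {ι : Type*} [Nonempty ι] [SemilatticeSup ι]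
    {F : ι → X → Y} {s : Set X} {x : X} (hF : EquicontinuousAt F x) (hs : Dense s)
    (hcauchy : ∀ y ∈ s, CauchySeq (F · y)) : CauchySeq (F · x) := by
  rw [Metric.cauchySeq_iff]
  intro ε hε
  obtain ⟨y, hys, hxy⟩ :=
    hs.inter_nhds_nonempty (Metric.equicontinuousAt_iff_right.mp hF (ε / 3) (by positivity))
  obtain ⟨N, hN⟩ := Metric.cauchySeq_iff.mp (hcauchy y hys) (ε / 3) (by positivity)
  refine ⟨N, fun a ha b hb => ?_⟩
  calc dist (F a x) (F b x)
      ≤ dist (F a x) (F a y) + dist (F a y) (F b y) + dist (F b y) (F b x) :=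
        dist_triangle4 _ _ _ _
    _ < ε / 3 + ε / 3 + ε / 3 := by
        gcongr
        · exact hxy a
        · exact hN a ha b hb
        · rw [dist_comm]; exact hxy b
    _ = ε := by ring

theorem Equicontinuous.exists_subseq_tendsto [TopologicalSpace.SeparableSpace X] [ProperSpace Y]
    {F : ℕ → X → Y} (hF : Equicontinuous F)
    (hbdd : ∀ x, Bornology.IsBounded (Set.range (F · x))) :
    ∃ φ : X → Y, ∃ σ : ℕ → ℕ, StrictMono σ ∧
      ∀ x, Tendsto (fun n => F (σ n) x) atTop (𝓝 (φ x)) := by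
  obtain ⟨s, hs_countable, hs_dense⟩ := TopologicalSpace.exists_countable_dense X
  have : Countable s := hs_countable.to_subtype
  have hK : IsCompact (Set.univ.pi fun y : s => closure (Set.range (F · y))) :=
    isCompact_univ_pi fun y => (hbdd y).isCompact_closure
  obtain ⟨_, -, σ, hσ, hσ_tendsto⟩ :=
    hK.tendsto_subseq (x := fun n (y : s) => F n y) fun n =>
      Set.mem_univ_pi.mpr fun y => subset_closure ⟨n, rfl⟩
  have hcauchy : ∀ x, CauchySeq (fun n => F (σ n) x) := fun x =>
    (hF.comp σ x).cauchySeq_of_dense hs_dense fun y hy =>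
      ((tendsto_pi_nhds.mp hσ_tendsto) ⟨y, hy⟩).cauchySeq
  choose φ hφ using fun x => cauchySeq_tendsto_of_complete (hcauchy x)
  exact ⟨φ, σ, hσ, hφ⟩

end PointwiseCompactness

def IsOneLipschitz {X : Type*} (d : X → X → ℝ) (ψ : X → ℝ) : Prop :=
  ∀ x y, ψ y - ψ x ≤ d x y

namespace IsOneLipschitz

variable {X : Type*} {d : X → X → ℝ} {ψ : X → ℝ}

theorem const (hd_nonneg : ∀ x y, 0 ≤ d x y) (c : ℝ) : IsOneLipschitz d fun _ => c :=
  fun x y => by simpa using hd_nonneg x y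

theorem sub_const (hψ : IsOneLipschitz d ψ) (c : ℝ) : IsOneLipschitz d fun x => ψ x - c :=
  fun x y => by simpa using hψ x y

theorem of_tendsto {ι : Type*} {l : Filter ι} [l.NeBot] {g : ι → X → ℝ} {φ : X → ℝ}
    (hg : ∀ i, IsOneLipschitz d (g i)) (hφ : ∀ x, Tendsto (g · x) l (𝓝 (φ x))) :
    IsOneLipschitz d φ :=
  fun x y => le_of_tendsto ((hφ y).sub (hφ x)) (Eventually.of_forall fun i => hg i x y)

theorem abs_sub_le (hd_nonneg : ∀ x y, 0 ≤ d x y) (hψ : IsOneLipschitz d ψ) (x₀ x : X) :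
    |ψ x - ψ x₀| ≤ d x₀ x + d x x₀ := by
  have := hψ x₀ x
  have := hψ x x₀
  have := hd_nonneg x₀ x
  have := hd_nonneg x x₀
  rw [abs_le]
  constructor <;> linarith

theorem lipschitzWith [PseudoMetricSpace X] (hd_dist : ∀ x y, d x y ≤ dist x y)
    (hψ : IsOneLipschitz d ψ) : LipschitzWith 1 ψ := by
  refine LipschitzWith.of_dist_le_mul fun x y => ?_
  rw [NNReal.coe_one, one_mul, Real.dist_eq, abs_sub_le_iff]
  exact ⟨(hψ y x).trans ((hd_dist y x).trans_eq (dist_comm y x)), (hψ x y).trans (hd_dist x y)⟩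

end IsOneLipschitz

section Integral

variable {X : Type*} [MeasurableSpace X] {m : Measure X} {f g : X → ℝ}

theorem integrable_mul_of_abs_le {D : X → ℝ} (hfD : Integrable (fun x => |f x| * D x) m)
    (hf : AEStronglyMeasurable f m) (hg : AEStronglyMeasurable g m) (hgD : ∀ x, |g x| ≤ D x) :
    Integrable (fun x => f x * g x) m :=
  hfD.mono' (hf.mul hg) <| Eventually.of_forall fun x => by
    rw [Real.norm_eq_abs, abs_mul]
    exact mul_le_mul_of_nonneg_left (hgD x) (abs_nonneg _)

theorem integral_mul_sub_const_of_integral_eq_zero (hf : Integrable f m)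
    (hf_mean : ∫ x, f x ∂m = 0) (hfg : Integrable (fun x => f x * g x) m) (c : ℝ) :
    ∫ x, f x * (g x - c) ∂m = ∫ x, f x * g x ∂m := by
  simp only [mul_sub]
  rw [integral_sub hfg (hf.mul_const c), integral_mul_const, hf_mean, zero_mul, sub_zero]

end Integral

section Maximiser

variable {X : Type*} [MetricSpace X] [MeasurableSpace X] [BorelSpace X] {m : Measure X}
  {d : X → X → ℝ} {f ψ : X → ℝ} {x₀ : X}

theorem IsOneLipschitz.integrable_mul_sub (hd_nonneg : ∀ x y, 0 ≤ d x y)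
    (hd_dist : ∀ x y, d x y ≤ dist x y) (hf : Integrable f m)
    (hfd : Integrable (fun x => |f x| * (d x₀ x + d x x₀)) m) (hψ : IsOneLipschitz d ψ) :
    Integrable (fun x => f x * (ψ x - ψ x₀)) m :=
  integrable_mul_of_abs_le hfd hf.1
    ((hψ.sub_const _).lipschitzWith hd_dist).continuous.aestronglyMeasurable
    (hψ.abs_sub_le hd_nonneg x₀)

theorem IsOneLipschitz.integrable_mul (hd_nonneg : ∀ x y, 0 ≤ d x y)
    (hd_dist : ∀ x y, d x y ≤ dist x y) (hf : Integrable f m)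
    (hfd : Integrable (fun x => |f x| * (d x₀ x + d x x₀)) m) (hψ : IsOneLipschitz d ψ) :
    Integrable (fun x => f x * ψ x) m := by
  refine ((hψ.integrable_mul_sub hd_nonneg hd_dist hf hfd).add (hf.mul_const (ψ x₀))).congr
    (Eventually.of_forall fun x => ?_)
  simp only [Pi.add_apply]
  ring

theorem IsOneLipschitz.integral_mul_le (hd_nonneg : ∀ x y, 0 ≤ d x y)
    (hd_dist : ∀ x y, d x y ≤ dist x y) (hf : Integrable f m) (hf_mean : ∫ x, f x ∂m = 0)
    (hfd : Integrable (fun x => |f x| * (d x₀ x + d x x₀)) m) (hψ : IsOneLipschitz d ψ) :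
    ∫ x, f x * ψ x ∂m ≤ ∫ x, |f x| * (d x₀ x + d x x₀) ∂m := by
  rw [← integral_mul_sub_const_of_integral_eq_zero hf hf_mean
    (hψ.integrable_mul hd_nonneg hd_dist hf hfd) (ψ x₀)]
  refine integral_mono (hψ.integrable_mul_sub hd_nonneg hd_dist hf hfd) hfd fun x => ?_
  calc f x * (ψ x - ψ x₀) ≤ |f x| * |ψ x - ψ x₀| := (le_abs_self _).trans_eq (abs_mul _ _)
    _ ≤ |f x| * (d x₀ x + d x x₀) :=
        mul_le_mul_of_nonneg_left (hψ.abs_sub_le hd_nonneg x₀ x) (abs_nonneg _)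

theorem exists_isOneLipschitz_forall_integral_mul_le [TopologicalSpace.SeparableSpace X]
    (hd_nonneg : ∀ x y, 0 ≤ d x y) (hd_dist : ∀ x y, d x y ≤ dist x y) (hf : Integrable f m)
    (hf_mean : ∫ x, f x ∂m = 0) (hfd : Integrable (fun x => |f x| * (d x₀ x + d x x₀)) m) :
    ∃ φ, IsOneLipschitz d φ ∧
      ∀ ψ, IsOneLipschitz d ψ → ∫ x, f x * ψ x ∂m ≤ ∫ x, f x * φ x ∂m := by
  set S := {r : ℝ | ∃ ψ, IsOneLipschitz d ψ ∧ r = ∫ x, f x * ψ x ∂m}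
  have hS_bdd : BddAbove S := ⟨_, by
    rintro _ ⟨ψ, hψ, rfl⟩
    exact hψ.integral_mul_le hd_nonneg hd_dist hf hf_mean hfd⟩
  have hS_nonempty : S.Nonempty := ⟨_, fun _ => 0, IsOneLipschitz.const hd_nonneg 0, rfl⟩
  obtain ⟨v, -, hv_tendsto, hvS⟩ := exists_seq_tendsto_sSup hS_nonempty hS_bdd
  choose ψ hψ hψv using hvS
  set χ : ℕ → X → ℝ := fun n x => ψ n x - ψ n x₀
  have hχ : ∀ n, IsOneLipschitz d (χ n) := fun n => (hψ n).sub_const _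
  have hχ_le : ∀ n x, |χ n x| ≤ d x₀ x + d x x₀ := fun n => (hψ n).abs_sub_le hd_nonneg x₀
  have hχ_lip : ∀ n, LipschitzWith 1 (χ n) := fun n => (hχ n).lipschitzWith hd_dist
  obtain ⟨φ, σ, hσ, hφ⟩ :=
    (LipschitzWith.uniformEquicontinuous χ 1 hχ_lip).equicontinuous.exists_subseq_tendsto
      fun x => Metric.isBounded_Icc (-(d x₀ x + d x x₀)) (d x₀ x + d x x₀) |>.subset <| by
        rintro _ ⟨n, rfl⟩
        exact abs_le.mp (hχ_le n x)
  have h_dominated : Tendsto (fun n => ∫ x, f x * χ (σ n) x ∂m) atTop (𝓝 (∫ x, f x * φ x ∂m)) :=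
    tendsto_integral_of_dominated_convergence _
      (fun n => hf.1.mul (hχ_lip (σ n)).continuous.aestronglyMeasurable) hfd
      (fun n => Eventually.of_forall fun x => by
        rw [Real.norm_eq_abs, abs_mul]
        exact mul_le_mul_of_nonneg_left (hχ_le (σ n) x) (abs_nonneg _))
      (Eventually.of_forall fun x => (hφ x).const_mul (f x))
  have h_maximising : Tendsto (fun n => ∫ x, f x * χ (σ n) x ∂m) atTop (𝓝 (sSup S)) := by
    simp only [χ, integral_mul_sub_const_of_integral_eq_zero hf hf_mean
      ((hψ _).integrable_mul hd_nonneg hd_dist hf hfd), ← hψv]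
    exact hv_tendsto.comp hσ.tendsto_atTop
  refine ⟨φ, IsOneLipschitz.of_tendsto (fun n => hχ (σ n)) hφ, fun ψ hψ => ?_⟩
  rw [tendsto_nhds_unique h_dominated h_maximising]
  exact le_csSup hS_bdd ⟨ψ, hψ, rfl⟩

end Maximiser

theorem stmt_6_general {X : Type*} [MetricSpace X] [ProperSpace X]
    [MeasurableSpace X] [BorelSpace X]
    (m : Measure X) (d : X → X → ℝ)
    (hd_nonneg : ∀ x y, 0 ≤ d x y)
    (hdist : ∀ x y, dist x y = max (d x y) (d y x))
    (f : X → ℝ) (hf_int : Integrable f m) (hf_mean : ∫ x, f x ∂m = 0)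
    (x₀ : X) (hfd : Integrable (fun x => |f x| * (d x₀ x + d x x₀)) m) :
    (∀ ψ : X → ℝ, (∀ x y, ψ y - ψ x ≤ d x y) →
        Integrable (fun x => f x * ψ x) m) ∧
    BddAbove {r : ℝ | ∃ ψ : X → ℝ, (∀ x y, ψ y - ψ x ≤ d x y) ∧
        r = ∫ x, f x * ψ x ∂m} ∧
    ∃ φ : X → ℝ, (∀ x y, φ y - φ x ≤ d x y) ∧
      ∀ ψ : X → ℝ, (∀ x y, ψ y - ψ x ≤ d x y) →
        ∫ x, f x * ψ x ∂m ≤ ∫ x, f x * φ x ∂m := by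
  have hd_dist : ∀ x y, d x y ≤ dist x y := fun x y => (hdist x y).ge.trans' (le_max_left _ _)
  refine ⟨fun ψ hψ => IsOneLipschitz.integrable_mul hd_nonneg hd_dist hf_int hfd hψ,
    ⟨∫ x, |f x| * (d x₀ x + d x x₀) ∂m, ?_⟩,
    exists_isOneLipschitz_forall_integral_mul_le hd_nonneg hd_dist hf_int hf_mean hfd⟩
  rintro _ ⟨ψ, hψ, rfl⟩
  exact IsOneLipschitz.integral_mul_le hd_nonneg hd_dist hf_int hf_mean hfd hψ

/-- For a mean-zero, suitably integrable `f`, each integral `∫ f ψ dm` over 1-Lipschitz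
`ψ` converges absolutely, the supremum over all 1-Lipschitz `ψ` is finite, and it is
attained by some 1-Lipschitz function `φ`. -/
theorem stmt_6 {X : Type*} [MetricSpace X] [ProperSpace X]
    [MeasurableSpace X] [BorelSpace X]
    (m : Measure X) (d : X → X → ℝ)
    (hd_nonneg : ∀ x y, 0 ≤ d x y)
    (hd_refl : ∀ x, d x x = 0)
    (hd_tri : ∀ x y z, d x y ≤ d x z + d z y)
    (hd_pos : ∀ x y, d x y = 0 → x = y)
    (hdist : ∀ x y, dist x y = max (d x y) (d y x))
    (f : X → ℝ) (hf_int : Integrable f m) (hf_mean : ∫ x, f x ∂m = 0)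
    (x₀ : X) (hfd : Integrable (fun x => |f x| * (d x₀ x + d x x₀)) m) :
    (∀ ψ : X → ℝ, (∀ x y, ψ y - ψ x ≤ d x y) →
        Integrable (fun x => f x * ψ x) m) ∧
    BddAbove {r : ℝ | ∃ ψ : X → ℝ, (∀ x y, ψ y - ψ x ≤ d x y) ∧
        r = ∫ x, f x * ψ x ∂m} ∧
    ∃ φ : X → ℝ, (∀ x y, φ y - φ x ≤ d x y) ∧
      ∀ ψ : X → ℝ, (∀ x y, ψ y - ψ x ≤ d x y) →
        ∫ x, f x * ψ x ∂m ≤ ∫ x, f x * φ x ∂m :=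
  stmt_6_general m d hd_nonneg hdist f hf_int hf_mean x₀ hfd
end

section
/- Let f ∈ L¹(X, m) satisfy ∫_X f dm = 0 and ∫_X |f(x)| (d(x₀,x) + d(x,x₀)) dm(x) < ∞ for some x₀ ∈ X, and let φ : X → ℝ be a 1-Lipschitz function maximizing ∫_X f ψ dm among all 1-Lipschitz functions ψ. Then f = 0 m-almost everywhere on the set D_φ := {x ∈ X : for all y ∈ X, if (x,y) ∈ Γ_φ or (y,x) ∈ Γ_φ then y = x}. -/
/-!
Suppose `f > 0` on a part of `D_φ` of positive measure; by inner regularity that part contains a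
closed set `K` with `∫_K f > 0`. For a continuous cutoff `0 ≤ u ≤ 1` the inf-convolutions
`ψ_t z = inf_y (φ y + d y z + u y / t)` are 1-Lipschitz competitors with `φ ≤ ψ_t ≤ φ + u / t`, so
maximality gives `∫ f · t (ψ_t - φ) ≤ 0`. The slopes `t (ψ_t - φ)` increase with `t`, and at a
point `x ∈ D_φ` they converge to `u x`, provided `u` is `≥ u x` off a compact set: away from `x`
the gap `φ y - φ x + d y x` is bounded below on compacts because no ray ends at `x`. Letting `u`
decrease to the indicator of `K` gives `∫_K f ≤ 0`, a contradiction. Applied to `-f`, `-φ` and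
the reversed distance, the same argument gives `f ≥ 0` a.e. on `D_φ`.
-/

open MeasureTheory Metric Set Filter Topology

section

variable {X : Type*}

lemma IsSigmaCompact.measurableSet [TopologicalSpace X] [MeasurableSpace X]
    [OpensMeasurableSpace X] [T2Space X] {s : Set X} (hs : IsSigmaCompact s) : MeasurableSet s := by
  obtain ⟨K, hK, rfl⟩ := hs
  exact .iUnion fun n => (hK n).measurableSet

lemma measurableSet_exists_ne_of_isClosed [MetricSpace X] [SigmaCompactSpace X]
    [MeasurableSpace X] [BorelSpace X] {R : Set (X × X)} (hR : IsClosed R) :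
    MeasurableSet {x | ∃ y, (x, y) ∈ R ∧ y ≠ x} := by
  have hR' : {x | ∃ y, (x, y) ∈ R ∧ y ≠ x} =
      ⋃ k : ℕ, Prod.fst '' (R ∩ {p | 1 / (k + 1 : ℝ) ≤ dist p.1 p.2}) := by
    ext x
    simp only [mem_ofPred_eq, mem_iUnion, mem_image, mem_inter_iff, Prod.exists,
      exists_and_right, exists_eq_right]
    constructor
    · rintro ⟨y, hxy, hne⟩
      obtain ⟨k, hk⟩ := exists_nat_one_div_lt (dist_pos.2 hne.symm)
      exact ⟨k, y, hxy, hk.le⟩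
    · rintro ⟨k, y, hxy, hk⟩
      refine ⟨y, hxy, fun h => ?_⟩
      rw [h, dist_self] at hk
      exact hk.not_gt Nat.one_div_pos_of_nat
  rw [hR']
  exact .iUnion fun k => ((isSigmaCompact_univ.of_isClosed_subset
    (hR.inter (isClosed_le continuous_const continuous_dist)) (subset_univ _)).image
      continuous_fst).measurableSet

lemma ae_nonpos_of_forall_isClosed_subset [MetricSpace X] [MeasurableSpace X] [BorelSpace X]
    {m : Measure X} {f : X → ℝ} {D : Set X} (hD : MeasurableSet D) (hf : Integrable f m)
    (h : ∀ K, IsClosed K → K ⊆ D → ∫ x in K, f x ∂m ≤ 0) : ∀ᵐ x ∂m, x ∈ D → f x ≤ 0 := by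
  obtain ⟨g, hg_meas, hfg⟩ : ∃ g : X → ℝ, Measurable g ∧ f =ᵐ[m] g :=
    ⟨hf.1.mk f, hf.1.stronglyMeasurable_mk.measurable, hf.1.ae_eq_mk⟩
  have hg : Integrable g m := hf.congr hfg
  have hlevel (c : ℝ) (hc : 0 < c) : m (D ∩ {x | c < g x}) = 0 := by
    set A := D ∩ {x | c < g x}
    have hA : MeasurableSet A := hD.inter (measurableSet_lt measurable_const hg_meas)
    have hA_fin : m A ≠ ⊤ :=
      ((measure_mono fun x (hx : x ∈ A) => (hx.2.le : c ≤ g x)).trans_lt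
        (hg.measure_ge_lt_top hc)).ne
    by_contra hA_pos
    have : IsFiniteMeasure (m.restrict A) := isFiniteMeasure_restrict.2 hA_fin
    obtain ⟨K, hKA, hK, hK_pos⟩ := hA.exists_lt_isClosed_of_ne_top (μ := m.restrict A)
      (measure_ne_top _ _) (pos_iff_ne_zero.2 (by rwa [Measure.restrict_apply_self]))
    rw [Measure.restrict_apply hK.measurableSet, inter_eq_left.2 hKA] at hK_pos
    have hK_fin : m K ≠ ⊤ := ((measure_mono hKA).trans_lt hA_fin.lt_top).ne
    have h_lower : c * m.real K ≤ ∫ x in K, g x ∂m :=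
      setIntegral_ge_of_const_le_real hK.measurableSet hK_fin (fun x hx => (hKA hx).2.le)
        hg.integrableOn
    have h_upper : ∫ x in K, g x ∂m ≤ 0 :=
      (integral_congr_ae (ae_restrict_of_ae hfg)).symm.trans_le
        (h K hK (hKA.trans inter_subset_left))
    have hK_real : 0 < m.real K := ENNReal.toReal_pos hK_pos.ne' hK_fin
    linarith [mul_pos hc hK_real]
  have hg_nonpos : ∀ᵐ x ∂m, x ∈ D → g x ≤ 0 := by
    rw [ae_iff]
    refine measure_mono_null (fun x hx => ?_)
      (measure_iUnion_null fun n : ℕ => hlevel (1 / (n + 1)) Nat.one_div_pos_of_nat)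
    simp only [mem_ofPred_eq, Classical.not_imp, not_le] at hx
    obtain ⟨n, hn⟩ := exists_nat_one_div_lt hx.2
    exact mem_iUnion.2 ⟨n, hx.1, hn⟩
  filter_upwards [hg_nonpos, hfg] with x hx hfx
  rwa [hfx]

lemma integral_mul_nonpos_of_tendsto [MeasurableSpace X] {m : Measure X} {f : X → ℝ}
    (hf : Integrable f m) {g : ℕ → X → ℝ} {G : X → ℝ} (hg : ∀ n, AEStronglyMeasurable (g n) m)
    (hg_le : ∀ n x, |g n x| ≤ 1) (hlim : ∀ x, Tendsto (fun n => g n x) atTop (𝓝 (G x)))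
    (hle : ∀ᶠ n in atTop, ∫ x, f x * g n x ∂m ≤ 0) : ∫ x, f x * G x ∂m ≤ 0 := by
  refine le_of_tendsto (tendsto_integral_of_dominated_convergence (fun x => |f x|)
    (fun n => hf.1.mul (hg n)) hf.abs (fun n => ae_of_all _ fun x => ?_)
    (ae_of_all _ fun x => (hlim x).const_mul (f x))) hle
  rw [Pi.mul_apply, Real.norm_eq_abs, abs_mul]
  exact mul_le_of_le_one_right (abs_nonneg _) (hg_le n x)

/-- The set `D_φ`. -/
def rayFreeSet (d : X → X → ℝ) (φ : X → ℝ) : Set X :=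
  {x | ∀ y, (φ y - φ x = d x y ∨ φ x - φ y = d y x) → y = x}

lemma rayFreeSet_swap (d : X → X → ℝ) (φ : X → ℝ) :
    rayFreeSet (fun x y => d y x) (fun x => -φ x) = rayFreeSet d φ := by
  ext x
  simp only [rayFreeSet, mem_ofPred_eq, neg_sub_neg, or_comm]

structure IsCompatibleAsymmDist [PseudoMetricSpace X] (d : X → X → ℝ) : Prop where
  refl : ∀ x, d x x = 0
  triangle : ∀ x y z, d x y ≤ d x z + d z y
  le_dist : ∀ x y, d x y ≤ dist x y
  continuous : Continuous fun p : X × X => d p.1 p.2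

def IsLipschitzMaximizer [MeasurableSpace X] (m : Measure X) (d : X → X → ℝ) (f φ : X → ℝ) :
    Prop :=
  ∀ ψ : X → ℝ, (∀ x y, ψ y - ψ x ≤ d x y) → ∫ x, f x * ψ x ∂m ≤ ∫ x, f x * φ x ∂m

lemma IsLipschitzMaximizer.neg_swap [MeasurableSpace X] {m : Measure X} {d : X → X → ℝ}
    {f φ : X → ℝ} (h : IsLipschitzMaximizer m d f φ) :
    IsLipschitzMaximizer m (fun x y => d y x) (fun x => -f x) (fun x => -φ x) := by
  intro ψ hψ
  simpa only [neg_mul, mul_neg, neg_neg] using h (fun x => -ψ x) fun x y => by linarith [hψ y x]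

section AsymmDist

variable [MetricSpace X] {d : X → X → ℝ}

lemma IsCompatibleAsymmDist.swap (hd : IsCompatibleAsymmDist d) :
    IsCompatibleAsymmDist fun x y => d y x where
  refl := hd.refl
  triangle x y z := (hd.triangle y x z).trans_eq (add_comm _ _)
  le_dist x y := (hd.le_dist y x).trans_eq (dist_comm y x)
  continuous := hd.continuous.comp continuous_swap

lemma IsCompatibleAsymmDist.continuous_of_sub_le (hd : IsCompatibleAsymmDist d) {ψ : X → ℝ}
    (hψ : ∀ x y, ψ y - ψ x ≤ d x y) : Continuous ψ := by
  refine (LipschitzWith.of_dist_le_mul fun a b => ?_).continuous (K := 1)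
  rw [NNReal.coe_one, one_mul, Real.dist_eq, abs_sub_le_iff]
  exact ⟨(hψ b a).trans ((hd.le_dist b a).trans_eq (dist_comm b a)),
    (hψ a b).trans (hd.le_dist a b)⟩

lemma measurableSet_rayFreeSet [ProperSpace X] [MeasurableSpace X] [BorelSpace X]
    (hd : IsCompatibleAsymmDist d) {φ : X → ℝ} (hφ : ∀ x y, φ y - φ x ≤ d x y) :
    MeasurableSet (rayFreeSet d φ) := by
  have hφc := hd.continuous_of_sub_le hφ
  have hR : IsClosed {p : X × X | φ p.2 - φ p.1 = d p.1 p.2 ∨ φ p.1 - φ p.2 = d p.2 p.1} :=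
    (isClosed_eq (by fun_prop) hd.continuous).union
      (isClosed_eq (by fun_prop) (hd.continuous.comp continuous_swap))
  convert (measurableSet_exists_ne_of_isClosed hR).compl using 1
  ext x
  simp [rayFreeSet]

end AsymmDist

section perturbSlope

variable {d : X → X → ℝ} {φ u : X → ℝ} {t t' : ℝ}

/-- `φ + perturbSlope d φ u t / t` is the largest function below `φ + u / t` that is 1-Lipschitz
for `d`. -/
noncomputable def perturbSlope (d : X → X → ℝ) (φ u : X → ℝ) (t : ℝ) (z : X) : ℝ :=
  ⨅ y, (u y + t * (φ y - φ z + d y z))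

lemma perturbSlope_term_nonneg (hφ : ∀ x y, φ y - φ x ≤ d x y) (hu : ∀ y, 0 ≤ u y) (ht : 0 ≤ t)
    (y z : X) : 0 ≤ u y + t * (φ y - φ z + d y z) :=
  add_nonneg (hu y) (mul_nonneg ht (by linarith [hφ y z]))

lemma perturbSlope_bddBelow (hφ : ∀ x y, φ y - φ x ≤ d x y) (hu : ∀ y, 0 ≤ u y) (ht : 0 ≤ t)
    (z : X) : BddBelow (range fun y => u y + t * (φ y - φ z + d y z)) :=
  ⟨0, forall_mem_range.2 fun y => perturbSlope_term_nonneg hφ hu ht y z⟩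

lemma perturbSlope_nonneg [Nonempty X] (hφ : ∀ x y, φ y - φ x ≤ d x y) (hu : ∀ y, 0 ≤ u y)
    (ht : 0 ≤ t) (z : X) : 0 ≤ perturbSlope d φ u t z :=
  le_ciInf fun y => perturbSlope_term_nonneg hφ hu ht y z

lemma perturbSlope_le (hd_refl : ∀ x, d x x = 0) (hφ : ∀ x y, φ y - φ x ≤ d x y)
    (hu : ∀ y, 0 ≤ u y) (ht : 0 ≤ t) (z : X) : perturbSlope d φ u t z ≤ u z :=
  (ciInf_le (perturbSlope_bddBelow hφ hu ht z) z).trans_eq (by simp [hd_refl])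

lemma perturbSlope_mono [Nonempty X] (hφ : ∀ x y, φ y - φ x ≤ d x y) (hu : ∀ y, 0 ≤ u y)
    (ht : 0 ≤ t) (htt' : t ≤ t') (z : X) : perturbSlope d φ u t z ≤ perturbSlope d φ u t' z :=
  le_ciInf fun y => (ciInf_le (perturbSlope_bddBelow hφ hu ht z) y).trans <| by
    gcongr
    linarith [hφ y z]

lemma perturbSlope_sub_le [Nonempty X] (hd_tri : ∀ x y z, d x y ≤ d x z + d z y)
    (hφ : ∀ x y, φ y - φ x ≤ d x y) (hu : ∀ y, 0 ≤ u y) (ht : 0 ≤ t) (a b : X) :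
    perturbSlope d φ u t b - perturbSlope d φ u t a ≤ t * (φ a - φ b + d a b) := by
  suffices perturbSlope d φ u t b - t * (φ a - φ b + d a b) ≤ perturbSlope d φ u t a by linarith
  refine le_ciInf fun y => ?_
  have hb : perturbSlope d φ u t b ≤ _ := ciInf_le (perturbSlope_bddBelow hφ hu ht b) y
  have htri := mul_le_mul_of_nonneg_left (hd_tri y b a) ht
  linarith

lemma add_perturbSlope_div_sub_le [Nonempty X] (hd_tri : ∀ x y z, d x y ≤ d x z + d z y)
    (hφ : ∀ x y, φ y - φ x ≤ d x y) (hu : ∀ y, 0 ≤ u y) (ht : 0 < t) (a b : X) :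
    (φ b + perturbSlope d φ u t b / t) - (φ a + perturbSlope d φ u t a / t) ≤ d a b := by
  have h := (div_le_iff₀' ht).2 (perturbSlope_sub_le hd_tri hφ hu ht.le a b)
  rw [sub_div] at h
  linarith

end perturbSlope

section perturbSlopeLimit

variable [MetricSpace X] [Nonempty X] {d : X → X → ℝ} {φ u : X → ℝ} {t : ℝ}

lemma continuous_perturbSlope (hd : IsCompatibleAsymmDist d) (hφ : ∀ x y, φ y - φ x ≤ d x y)
    (hu : ∀ y, 0 ≤ u y) (ht : 0 < t) : Continuous (perturbSlope d φ u t) := by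
  have hψ := hd.continuous_of_sub_le (add_perturbSlope_div_sub_le hd.triangle hφ hu ht)
  have hs : perturbSlope d φ u t = fun z => t * ((φ z + perturbSlope d φ u t z / t) - φ z) := by
    funext z
    rw [add_sub_cancel_left, mul_div_cancel₀ _ ht.ne']
  rw [hs]
  exact continuous_const.mul (hψ.sub (hd.continuous_of_sub_le hφ))

lemma exists_le_perturbSlope (hd : IsCompatibleAsymmDist d) (hφ : ∀ x y, φ y - φ x ≤ d x y)
    (hu : ∀ y, 0 ≤ u y) (hu_lsc : LowerSemicontinuous u) {C : Set X} (hC : IsCompact C) {x : X}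
    (hC_out : ∀ y ∉ C, u x ≤ u y) (hx : x ∈ rayFreeSet d φ) {c : ℝ} (hc : c < u x) :
    ∃ t, 0 ≤ t ∧ c ≤ perturbSlope d φ u t x := by
  obtain ⟨r, hr, hball⟩ : ∃ r > 0, ∀ y, dist y x < r → c < u y :=
    Metric.eventually_nhds_iff.1 (hu_lsc x c hc)
  set F : X → ℝ := fun y => φ y - φ x + d y x
  have hF0 : ∀ y, 0 ≤ F y := fun y => by linarith [hφ y x]
  have hF : Continuous F := ((hd.continuous_of_sub_le hφ).sub continuous_const).add
    (hd.continuous.comp (continuous_id.prodMk continuous_const))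
  -- no ray ends at `x`, so the gap `F` is positive on the compact set `C \ ball x r`
  obtain ⟨δ, hδ, hFδ⟩ : ∃ δ > 0, ∀ y ∈ C \ ball x r, δ ≤ F y := by
    refine (hC.diff isOpen_ball).exists_forall_le' hF.continuousOn fun y hy => ?_
    refine (hF0 y).lt_of_ne fun hFy => hy.2 ?_
    rw [hx y (Or.inr (by linarith))]
    exact mem_ball_self hr
  refine ⟨max c 0 / δ, by positivity, le_ciInf fun y => ?_⟩
  have htF : 0 ≤ max c 0 / δ * F y := mul_nonneg (by positivity) (hF0 y)
  by_cases hy : dist y x < r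
  · linarith [hball y hy]
  by_cases hyC : y ∈ C
  · have : max c 0 ≤ max c 0 / δ * F y := by
      calc max c 0 = max c 0 / δ * δ := (div_mul_cancel₀ _ hδ.ne').symm
        _ ≤ max c 0 / δ * F y := by gcongr; exact hFδ y ⟨hyC, hy⟩
    linarith [le_max_left c 0, hu y]
  · linarith [hC_out y hyC]

lemma tendsto_perturbSlope_atTop (hd : IsCompatibleAsymmDist d) (hφ : ∀ x y, φ y - φ x ≤ d x y)
    (hu : ∀ y, 0 ≤ u y) (hu_lsc : LowerSemicontinuous u) {C : Set X} (hC : IsCompact C) {x : X}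
    (hC_out : ∀ y ∉ C, u x ≤ u y) (hx : x ∈ rayFreeSet d φ) :
    Tendsto (fun t => perturbSlope d φ u t x) atTop (𝓝 (u x)) := by
  refine tendsto_order.2 ⟨fun c hc => ?_, fun c hc => ?_⟩
  · obtain ⟨c', hcc', hc'⟩ := exists_between hc
    obtain ⟨t₀, ht₀, hle⟩ := exists_le_perturbSlope hd hφ hu hu_lsc hC hC_out hx hc'
    filter_upwards [eventually_ge_atTop t₀] with t ht
    exact hcc'.trans_le (hle.trans (perturbSlope_mono hφ hu ht₀ ht x))
  · filter_upwards [eventually_ge_atTop 0] with t ht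
    exact (perturbSlope_le hd.refl hφ hu ht x).trans_lt hc

end perturbSlopeLimit

section Integral

variable [MetricSpace X] [MeasurableSpace X] [BorelSpace X] {m : Measure X} {d : X → X → ℝ}
  {f φ u : X → ℝ}

lemma integrable_mul_of_sub_le (hd : IsCompatibleAsymmDist d) (hd_nonneg : ∀ x y, 0 ≤ d x y)
    (hf : Integrable f m) {x₀ : X} (hfd : Integrable (fun x => |f x| * (d x₀ x + d x x₀)) m)
    {ψ : X → ℝ} (hψ : ∀ x y, ψ y - ψ x ≤ d x y) : Integrable (fun x => f x * ψ x) m := by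
  refine Integrable.mono' ((hf.abs.mul_const |ψ x₀|).add hfd)
    (hf.1.mul (hd.continuous_of_sub_le hψ).aestronglyMeasurable) (ae_of_all _ fun x => ?_)
  have hψx : |ψ x| ≤ |ψ x₀| + (d x₀ x + d x x₀) := by
    have h : |ψ x - ψ x₀| ≤ d x₀ x + d x x₀ := abs_sub_le_iff.2
      ⟨by linarith [hψ x₀ x, hd_nonneg x x₀], by linarith [hψ x x₀, hd_nonneg x₀ x]⟩
    linarith [abs_sub_abs_le_abs_sub (ψ x) (ψ x₀)]
  rw [Real.norm_eq_abs, abs_mul]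
  calc |f x| * |ψ x| ≤ |f x| * (|ψ x₀| + (d x₀ x + d x x₀)) := by gcongr
    _ = |f x| * |ψ x₀| + |f x| * (d x₀ x + d x x₀) := mul_add _ _ _

lemma integral_mul_perturbSlope_nonpos [Nonempty X] (hd : IsCompatibleAsymmDist d)
    (hf : Integrable f m) (hfφ : Integrable (fun x => f x * φ x) m)
    (hφ : ∀ x y, φ y - φ x ≤ d x y) (hmax : IsLipschitzMaximizer m d f φ) (hu0 : ∀ y, 0 ≤ u y)
    (hu1 : ∀ y, u y ≤ 1) {t : ℝ} (ht : 0 < t) : ∫ x, f x * perturbSlope d φ u t x ∂m ≤ 0 := by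
  set s := perturbSlope d φ u t
  have hfs : Integrable (fun x => f x * s x) m :=
    hf.mul_bdd (continuous_perturbSlope hd hφ hu0 ht).aestronglyMeasurable (c := 1)
      (ae_of_all _ fun x => by
        rw [Real.norm_eq_abs, abs_le]
        exact ⟨by linarith [perturbSlope_nonneg hφ hu0 ht.le x],
          (perturbSlope_le hd.refl hφ hu0 ht.le x).trans (hu1 x)⟩)
  have hsplit : ∫ x, f x * (φ x + s x / t) ∂m = ∫ x, f x * φ x ∂m + t⁻¹ * ∫ x, f x * s x ∂m := by
    rw [← integral_const_mul, ← integral_add hfφ (hfs.const_mul t⁻¹)]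
    congr 1
    funext x
    ring
  have := hmax _ (add_perturbSlope_div_sub_le hd.triangle hφ hu0 ht)
  rw [hsplit] at this
  exact nonpos_of_mul_nonpos_left (by linarith) (inv_pos.2 ht)

lemma exists_eqOn_rayFreeSet_integral_mul_nonpos [Nonempty X] (hd : IsCompatibleAsymmDist d)
    (hf : Integrable f m) (hfφ : Integrable (fun x => f x * φ x) m)
    (hφ : ∀ x y, φ y - φ x ≤ d x y) (hmax : IsLipschitzMaximizer m d f φ) (hu0 : ∀ y, 0 ≤ u y)
    (hu1 : ∀ y, u y ≤ 1) (hu_lsc : LowerSemicontinuous u) {C : Set X} (hC : IsCompact C)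
    (hC_out : ∀ x, ∀ y ∉ C, u x ≤ u y) :
    ∃ v : X → ℝ, AEStronglyMeasurable v m ∧ (∀ x, 0 ≤ v x ∧ v x ≤ u x) ∧
      EqOn v u (rayFreeSet d φ) ∧ ∫ x, f x * v x ∂m ≤ 0 := by
  set g : ℕ → X → ℝ := fun n => perturbSlope d φ u (n + 1)
  have hpos (n : ℕ) : (0 : ℝ) < n + 1 := n.cast_add_one_pos
  have hmono (x : X) : Monotone fun n => g n x := monotone_nat_of_le_succ fun n =>
    perturbSlope_mono hφ hu0 (hpos n).le (by push_cast; linarith) x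
  have hle (n : ℕ) (x : X) : g n x ≤ u x := perturbSlope_le hd.refl hφ hu0 (hpos n).le x
  have hlim (x : X) : Tendsto (fun n => g n x) atTop (𝓝 (⨆ n, g n x)) :=
    tendsto_atTop_ciSup (hmono x) ⟨u x, forall_mem_range.2 fun n => hle n x⟩
  have hg_meas (n : ℕ) : AEStronglyMeasurable (g n) m :=
    (continuous_perturbSlope hd hφ hu0 (hpos n)).aestronglyMeasurable
  refine ⟨fun x => ⨆ n, g n x, aestronglyMeasurable_of_tendsto_ae atTop hg_meas (ae_of_all _ hlim),
    fun x => ⟨(perturbSlope_nonneg hφ hu0 (hpos 0).le x).trans ((hmono x).ge_of_tendsto (hlim x) 0),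
      ciSup_le fun n => hle n x⟩, fun x hx => ?_, ?_⟩
  · refine tendsto_nhds_unique (hlim x) ?_
    exact (tendsto_perturbSlope_atTop hd hφ hu0 hu_lsc hC (hC_out x) hx).comp
      (tendsto_atTop_add_const_right _ 1 tendsto_natCast_atTop_atTop)
  · refine integral_mul_nonpos_of_tendsto hf hg_meas (fun n x => abs_le.2 ⟨?_, ?_⟩) hlim
      (Eventually.of_forall fun n => integral_mul_perturbSlope_nonpos hd hf hfφ hφ hmax hu0 hu1
        (hpos n))
    · linarith [perturbSlope_nonneg hφ hu0 (hpos n).le x]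
    · exact (hle n x).trans (hu1 x)

end Integral

section Cutoff

variable [MetricSpace X] {K : Set X} {x₀ x : X} {n : ℕ}

noncomputable def nearOrFarCutoff (K : Set X) (x₀ : X) (n : ℕ) (x : X) : ℝ :=
  max 0 (min 1 (max (1 - n * infDist x K) (dist x x₀ - n)))

lemma nearOrFarCutoff_nonneg : 0 ≤ nearOrFarCutoff K x₀ n x := le_max_left _ _

lemma nearOrFarCutoff_le_one : nearOrFarCutoff K x₀ n x ≤ 1 :=
  max_le zero_le_one (min_le_left _ _)

lemma continuous_nearOrFarCutoff : Continuous (nearOrFarCutoff K x₀ n) := by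
  unfold nearOrFarCutoff
  fun_prop

lemma nearOrFarCutoff_eq_one_of_one_le (h : 1 ≤ max (1 - n * infDist x K) (dist x x₀ - n)) :
    nearOrFarCutoff K x₀ n x = 1 := by
  rw [nearOrFarCutoff, min_eq_left h, max_eq_right zero_le_one]

lemma nearOrFarCutoff_of_mem (hx : x ∈ K) : nearOrFarCutoff K x₀ n x = 1 :=
  nearOrFarCutoff_eq_one_of_one_le (le_max_of_le_left (by simp [infDist_zero_of_mem hx]))

lemma nearOrFarCutoff_of_lt_dist (hx : n + 1 < dist x x₀) : nearOrFarCutoff K x₀ n x = 1 :=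
  nearOrFarCutoff_eq_one_of_one_le (le_max_of_le_right (by linarith))

lemma eventually_nearOrFarCutoff_eq_zero (hK : IsClosed K) (hK_ne : K.Nonempty) (hx : x ∉ K) :
    ∀ᶠ n in atTop, nearOrFarCutoff K x₀ n x = 0 := by
  have hpos := (hK.notMem_iff_infDist_pos hK_ne).1 hx
  obtain ⟨N, hN⟩ := exists_nat_ge (max (dist x x₀) (infDist x K)⁻¹)
  filter_upwards [eventually_ge_atTop N] with n hn
  have hn' : max (dist x x₀) (infDist x K)⁻¹ ≤ n := hN.trans (Nat.cast_le.2 hn)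
  have h₁ : 1 ≤ n * infDist x K := (inv_le_iff_one_le_mul₀ hpos).1 ((le_max_right _ _).trans hn')
  have h₂ : dist x x₀ ≤ n := (le_max_left _ _).trans hn'
  exact max_eq_left (min_le_of_right_le (max_le (by linarith) (by linarith)))

end Cutoff

section Main

variable [MetricSpace X] [ProperSpace X] [MeasurableSpace X] [BorelSpace X] {m : Measure X}
  {d : X → X → ℝ} {f φ : X → ℝ}

lemma setIntegral_nonpos_of_isClosed_subset_rayFreeSet (hd : IsCompatibleAsymmDist d)
    (hf : Integrable f m) (hfφ : Integrable (fun x => f x * φ x) m)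
    (hφ : ∀ x y, φ y - φ x ≤ d x y) (hmax : IsLipschitzMaximizer m d f φ) {K : Set X}
    (hK : IsClosed K) (hKD : K ⊆ rayFreeSet d φ) : ∫ x in K, f x ∂m ≤ 0 := by
  rcases K.eq_empty_or_nonempty with rfl | ⟨x₀, hx₀⟩
  · simp
  have : Nonempty X := ⟨x₀⟩
  choose v hv_meas hv_bounds hv_eq hv_int using fun n : ℕ =>
    exists_eqOn_rayFreeSet_integral_mul_nonpos hd hf hfφ hφ hmax
      (fun _ => nearOrFarCutoff_nonneg) (fun _ => nearOrFarCutoff_le_one)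
      continuous_nearOrFarCutoff.lowerSemicontinuous (isCompact_closedBall x₀ (n + 1))
      fun _ _ hy => nearOrFarCutoff_le_one.trans_eq
        (nearOrFarCutoff_of_lt_dist (not_le.1 (mt mem_closedBall.2 hy))).symm
  have hlim (x : X) : Tendsto (fun n => v n x) atTop (𝓝 (K.indicator 1 x)) := by
    by_cases hx : x ∈ K
    · rw [indicator_of_mem hx, Pi.one_apply]
      exact tendsto_const_nhds.congr fun n =>
        ((hv_eq n (hKD hx)).trans (nearOrFarCutoff_of_mem hx)).symm
    · rw [indicator_of_notMem hx]
      refine tendsto_const_nhds.congr' ?_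
      filter_upwards [eventually_nearOrFarCutoff_eq_zero hK ⟨x₀, hx₀⟩ hx] with n hn
      exact le_antisymm (hv_bounds n x).1 ((hv_bounds n x).2.trans hn.le)
  have := integral_mul_nonpos_of_tendsto hf hv_meas
    (fun n x => abs_le.2 ⟨by linarith [(hv_bounds n x).1],
      (hv_bounds n x).2.trans nearOrFarCutoff_le_one⟩) hlim (Eventually.of_forall hv_int)
  simpa only [← indicator_mul_right, Pi.one_apply, mul_one, integral_indicator hK.measurableSet]
    using this

lemma ae_nonpos_on_rayFreeSet (hd : IsCompatibleAsymmDist d) (hf : Integrable f m)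
    (hfφ : Integrable (fun x => f x * φ x) m) (hφ : ∀ x y, φ y - φ x ≤ d x y)
    (hmax : IsLipschitzMaximizer m d f φ) : ∀ᵐ x ∂m, x ∈ rayFreeSet d φ → f x ≤ 0 :=
  ae_nonpos_of_forall_isClosed_subset (measurableSet_rayFreeSet hd hφ) hf fun _ hK hKD =>
    setIntegral_nonpos_of_isClosed_subset_rayFreeSet hd hf hfφ hφ hmax hK hKD

end Main

end

theorem stmt_10_general {X : Type*} [MetricSpace X] [ProperSpace X]
    [MeasurableSpace X] [BorelSpace X]
    (m : Measure X) (d : X → X → ℝ)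
    (hd_nonneg : ∀ x y, 0 ≤ d x y)
    (hd_refl : ∀ x, d x x = 0)
    (hd_tri : ∀ x y z, d x y ≤ d x z + d z y)
    (hdist : ∀ x y, dist x y = max (d x y) (d y x))
    (hd_cont : Continuous fun p : X × X => d p.1 p.2)
    (f : X → ℝ) (hf_int : Integrable f m)
    (x₀ : X) (hfd : Integrable (fun x => |f x| * (d x₀ x + d x x₀)) m)
    (φ : X → ℝ) (hφ : ∀ x y, φ y - φ x ≤ d x y)
    (hmax : ∀ ψ : X → ℝ, (∀ x y, ψ y - ψ x ≤ d x y) →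
      ∫ x, f x * ψ x ∂m ≤ ∫ x, f x * φ x ∂m) :
    ∀ᵐ x ∂m,
      (∀ y : X, (φ y - φ x = d x y ∨ φ x - φ y = d y x) → y = x) → f x = 0 := by
  have hd : IsCompatibleAsymmDist d :=
    ⟨hd_refl, hd_tri, fun x y => (le_max_left _ _).trans (hdist x y).ge, hd_cont⟩
  have hfφ := integrable_mul_of_sub_le hd hd_nonneg hf_int hfd hφ
  have h_le := ae_nonpos_on_rayFreeSet hd hf_int hfφ hφ hmax
  have h_ge := ae_nonpos_on_rayFreeSet (f := fun x => -f x) (φ := fun x => -φ x) hd.swap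
    hf_int.neg (by simpa only [neg_mul_neg] using hfφ) (fun x y => by linarith [hφ y x])
    (IsLipschitzMaximizer.neg_swap hmax)
  rw [rayFreeSet_swap] at h_ge
  filter_upwards [h_le, h_ge] with x h_le h_ge hx
  linarith [h_le hx, h_ge hx]

/-- If `φ` maximizes `∫ f ψ dm` among all 1-Lipschitz functions `ψ` (for a mean-zero,
suitably integrable `f`), then `f = 0` `m`-almost everywhere on the set `D_φ` of points
not lying on any non-degenerate transport ray. -/
theorem stmt_10 {X : Type*} [MetricSpace X] [ProperSpace X]
    [MeasurableSpace X] [BorelSpace X]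
    (m : Measure X) (d : X → X → ℝ)
    (hd_nonneg : ∀ x y, 0 ≤ d x y)
    (hd_refl : ∀ x, d x x = 0)
    (hd_tri : ∀ x y z, d x y ≤ d x z + d z y)
    (hd_pos : ∀ x y, d x y = 0 → x = y)
    (hdist : ∀ x y, dist x y = max (d x y) (d y x))
    (hd_cont : Continuous fun p : X × X => d p.1 p.2)
    (f : X → ℝ) (hf_int : Integrable f m) (hf_mean : ∫ x, f x ∂m = 0)
    (x₀ : X) (hfd : Integrable (fun x => |f x| * (d x₀ x + d x x₀)) m)
    (φ : X → ℝ) (hφ : ∀ x y, φ y - φ x ≤ d x y)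
    (hmax : ∀ ψ : X → ℝ, (∀ x y, ψ y - ψ x ≤ d x y) →
      ∫ x, f x * ψ x ∂m ≤ ∫ x, f x * φ x ∂m) :
    ∀ᵐ x ∂m,
      (∀ y : X, (φ y - φ x = d x y ∨ φ x - φ y = d y x) → y = x) → f x = 0 :=
  stmt_10_general m d hd_nonneg hd_refl hd_tri hdist hd_cont f hf_int x₀ hfd φ hφ hmax
end

section
/- Let I ⊆ ℝ be an open interval, N ∈ (1,∞), K ∈ ℝ, ψ : I → ℝ a C² function, and ρ := e^{−ψ}. Assume that for all s < t in I (with t − s < π√((N−1)/K) in case K > 0) and all λ ∈ (0,1), ρ((1−λ)s + λt) ≥ ( σ^{(1−λ)}_{K/(N−1)}(t−s) · ρ(s)^{1/(N−1)} + σ^{(λ)}_{K/(N−1)}(t−s) · ρ(t)^{1/(N−1)} )^{N−1}. Then ψ''(t) − ψ'(t)²/(N−1) ≥ K for every t ∈ I; equivalently, (ρ^{1/(N−1)})'' + (K/(N−1)) ρ^{1/(N−1)} ≤ 0 on I. -/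
/-!
Put `f := ρ^{1/(N-1)} = exp(-ψ/(N-1))` and `κ := K/(N-1)`. Applying `CD(K,N)` with `λ = 1/2` on
`[t-ε, t+ε]` and using `σ^{(1/2)}_κ(2ε) = s_κ(ε)/s_κ(2ε) = 1/(2 c_κ(ε))`, where `c_κ = s_κ'` is the
cosine companion of `s_κ`, gives `f(t+ε) + f(t-ε) ≤ 2 c_κ(ε) f(t)`. As `c_κ(ε) = 1 - κε²/2 + o(ε²)`,
dividing by `ε²` and letting `ε → 0` yields `f'' ≤ -κ f`, and
`f'' = f (ψ'²/(N-1)² - ψ''/(N-1))` turns this into the claim.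
-/

/-- The comparison function `s_κ`: solution of `f'' + κ f = 0`, `f(0) = 0`, `f'(0) = 1`. -/
noncomputable def sk (κ r : ℝ) : ℝ :=
  if 0 < κ then Real.sin (Real.sqrt κ * r) / Real.sqrt κ
  else if κ = 0 then r
  else Real.sinh (Real.sqrt (-κ) * r) / Real.sqrt (-κ)

/-- The distortion coefficient `σ^{(λ)}_κ(r) = s_κ(λ r)/s_κ(r)`, with `σ^{(λ)}_κ(0) = λ`. -/
noncomputable def sigmaCoeff (κ lam r : ℝ) : ℝ :=
  if r = 0 then lam else sk κ (lam * r) / sk κ r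

open Filter Real Topology

noncomputable def ck (κ r : ℝ) : ℝ :=
  if 0 < κ then cos (√κ * r)
  else if κ = 0 then 1
  else cosh (√(-κ) * r)

theorem hasDerivAt_sk (κ r : ℝ) : HasDerivAt (sk κ) (ck κ r) r := by
  unfold sk ck
  split_ifs with hpos hzero
  · have hκ : √κ ≠ 0 := (sqrt_pos.2 hpos).ne'
    refine (((hasDerivAt_id r).const_mul √κ).sin.div_const √κ).congr_deriv ?_
    field_simp; rfl
  · exact hasDerivAt_id r
  · have hκ : √(-κ) ≠ 0 := (sqrt_pos.2 (neg_pos.2 (lt_of_le_of_ne (not_lt.1 hpos) hzero))).ne'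
    refine (((hasDerivAt_id r).const_mul √(-κ)).sinh.div_const √(-κ)).congr_deriv ?_
    field_simp; rfl

theorem sk_two_mul (κ r : ℝ) : sk κ (2 * r) = 2 * sk κ r * ck κ r := by
  unfold sk ck
  split_ifs
  · rw [mul_left_comm, sin_two_mul]; ring
  · ring
  · rw [mul_left_comm, sinh_two_mul]; ring

theorem ck_two_mul (κ r : ℝ) : ck κ (2 * r) = 1 - 2 * κ * sk κ r ^ 2 := by
  unfold sk ck
  split_ifs with hpos hzero
  · rw [mul_left_comm, cos_two_mul, div_pow, sq_sqrt hpos.le, cos_sq']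
    field_simp
    ring
  · simp [hzero]
  · have hκ : 0 < -κ := neg_pos.2 (lt_of_le_of_ne (not_lt.1 hpos) hzero)
    rw [mul_left_comm, cosh_two_mul, div_pow, sq_sqrt hκ.le, cosh_sq]
    field_simp
    ring

theorem sk_zero (κ : ℝ) : sk κ 0 = 0 := by
  unfold sk; split_ifs <;> simp

theorem ck_zero (κ : ℝ) : ck κ 0 = 1 := by
  unfold ck; split_ifs <;> simp

theorem ck_eq_one_sub (κ r : ℝ) : ck κ r = 1 - 2 * κ * sk κ (r / 2) ^ 2 := by
  rw [← ck_two_mul, mul_div_cancel₀ r two_ne_zero]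

theorem continuous_sk (κ : ℝ) : Continuous (sk κ) :=
  continuous_iff_continuousAt.2 fun r => (hasDerivAt_sk κ r).continuousAt

theorem continuous_ck (κ : ℝ) : Continuous (ck κ) := by
  simp_rw [funext (ck_eq_one_sub κ)]
  exact continuous_const.sub
    (continuous_const.mul (((continuous_sk κ).comp (continuous_id.div_const 2)).pow 2))

theorem tendsto_sk_div_self (κ : ℝ) : Tendsto (fun r => sk κ r / r) (𝓝[≠] 0) (𝓝 1) := by
  have h := hasDerivAt_iff_tendsto_slope.1 (hasDerivAt_sk κ 0)
  rw [ck_zero] at h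
  refine h.congr fun r => ?_
  rw [slope_def_field, sk_zero, sub_zero, sub_zero]

theorem tendsto_ck_sub_one_div_sq (κ : ℝ) :
    Tendsto (fun r => (ck κ r - 1) / r ^ 2) (𝓝[≠] 0) (𝓝 (-κ / 2)) := by
  have hhalf : Tendsto (fun r : ℝ => r / 2) (𝓝[≠] 0) (𝓝[≠] 0) :=
    tendsto_nhdsWithin_of_tendsto_nhds_of_eventually_within _
      (((continuous_id.div_const (2 : ℝ)).tendsto' 0 0 (zero_div 2)).mono_left nhdsWithin_le_nhds)
      (eventually_nhdsWithin_of_forall fun r hr => div_ne_zero hr two_ne_zero)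
  have h := (((tendsto_sk_div_self κ).comp hhalf).pow 2).const_mul (-κ / 2)
  rw [one_pow, mul_one] at h
  refine h.congr' (eventually_nhdsWithin_of_forall fun r hr => ?_)
  simp only [Function.comp_apply, ck_eq_one_sub κ r]
  field_simp
  ring

theorem eventually_sk_pos (κ : ℝ) : ∀ᶠ r in 𝓝[>] 0, 0 < sk κ r := by
  have h := ((tendsto_sk_div_self κ).mono_left (nhdsWithin_mono _ fun r (hr : 0 < r) => hr.ne'))
    |>.eventually (lt_mem_nhds one_pos)
  filter_upwards [h, self_mem_nhdsWithin] with r hr (hr0 : 0 < r)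
  exact (div_pos_iff_of_pos_right hr0).1 hr

theorem eventually_ck_pos (κ : ℝ) : ∀ᶠ r in 𝓝 0, 0 < ck κ r :=
  (continuous_ck κ).continuousAt.eventually (lt_mem_nhds (by rw [ck_zero]; exact one_pos))

theorem sigmaCoeff_half_two_mul {κ r : ℝ} (hr : r ≠ 0) (hsk : sk κ r ≠ 0) :
    sigmaCoeff κ (1 / 2) (2 * r) = (2 * ck κ r)⁻¹ := by
  rw [sigmaCoeff, if_neg (mul_ne_zero two_ne_zero hr), sk_two_mul,
    show 1 / 2 * (2 * r) = r by ring]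
  field_simp

theorem tendsto_symm_second_diff {f : ℝ → ℝ} {x : ℝ} (hf : ContDiffAt ℝ 2 f x) :
    Tendsto (fun h => (f (x + h) + f (x - h) - 2 * f x) / h ^ 2) (𝓝[≠] 0)
      (𝓝 (deriv (deriv f) x)) := by
  obtain ⟨u, hu, hfu⟩ := hf.contDiffOn (m := 2) le_rfl (by simp)
  obtain ⟨r, hr, hball⟩ := Metric.mem_nhds_iff.1 hu
  have hx := Metric.mem_ball_self (x := x) hr
  have hT := taylor_isLittleO (convex_ball x r) hx (hfu.mono hball)
  rw [nhdsWithin_eq_nhds.2 (Metric.ball_mem_nhds x hr)] at hT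
  have hpoly : ∀ y, taylorWithinEval f 2 (Metric.ball x r) x y =
      f x + deriv f x * (y - x) + deriv (deriv f) x / 2 * (y - x) ^ 2 := by
    intro y
    have hk : ∀ k ≤ 2, iteratedDerivWithin k f (Metric.ball x r) x = iteratedDeriv k f x :=
      fun k hk => iteratedDerivWithin_eq_iteratedDeriv Metric.isOpen_ball.uniqueDiffOn
        (hf.of_le (by exact_mod_cast hk)) hx
    simp [taylor_within_apply, hk, iteratedDeriv_succ]
    ring
  have hplus := (hT.comp_tendsto ((continuous_const_add x).tendsto' 0 x (add_zero x))).congr_right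
    (g₂ := fun h => h ^ 2) fun h => by simp
  have hminus := (hT.comp_tendsto ((continuous_sub_left x).tendsto' 0 x (sub_zero x))).congr_right
    (g₂ := fun h => h ^ 2) fun h => by simp
  have hrem := (hplus.add hminus).tendsto_div_nhds_zero.mono_left
    (nhdsWithin_le_nhds (s := {0}ᶜ))
  have hlim := hrem.const_add (deriv (deriv f) x)
  rw [add_zero] at hlim
  refine hlim.congr' (eventually_nhdsWithin_of_forall fun h (hh : h ≠ 0) => ?_)
  simp only [Function.comp_apply, hpoly]
  field_simp
  ring

theorem deriv_deriv_le_neg_mul_of_add_le {f : ℝ → ℝ} {x κ : ℝ} (hf : ContDiffAt ℝ 2 f x)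
    (h : ∀ᶠ ε in 𝓝[>] 0, f (x + ε) + f (x - ε) ≤ 2 * ck κ ε * f x) :
    deriv (deriv f) x ≤ -κ * f x := by
  have hGT : 𝓝[>] (0 : ℝ) ≤ 𝓝[≠] 0 := nhdsWithin_mono _ fun r (hr : 0 < r) => hr.ne'
  have hlim := le_of_tendsto_of_tendsto ((tendsto_symm_second_diff hf).mono_left hGT)
    (((tendsto_ck_sub_one_div_sq κ).const_mul (2 * f x)).mono_left hGT) <| by
      filter_upwards [h] with ε hε
      rw [← mul_div_assoc]
      gcongr
      linarith
  linarith

theorem deriv_deriv_exp_comp {g : ℝ → ℝ} {x : ℝ} (hg : ContDiffAt ℝ 2 g x) :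
    deriv (deriv fun t => exp (g t)) x = exp (g x) * (deriv g x ^ 2 + deriv (deriv g) x) := by
  have hderiv : deriv (fun t => exp (g t)) =ᶠ[𝓝 x] fun t => exp (g t) * deriv g t := by
    filter_upwards [hg.eventually (by simp)] with y hy
    exact deriv_exp (hy.differentiableAt (by norm_num))
  have hg' : DifferentiableAt ℝ (deriv g) x :=
    (hg.derivWithin (m := 1) (by norm_num)).differentiableAt (by norm_num)
  rw [hderiv.deriv_eq]
  refine ((hg.differentiableAt (by norm_num)).hasDerivAt.exp.mul hg'.hasDerivAt).deriv.trans ?_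
  ring

theorem add_le_two_mul_ck_mul_of_le_rpow {κ m r a b c : ℝ} (hm : 0 < m) (hr : r ≠ 0)
    (hsk : sk κ r ≠ 0) (hck : 0 < ck κ r) (ha : 0 ≤ a) (hb : 0 ≤ b) (hc : 0 ≤ c)
    (h : c ≥ (sigmaCoeff κ (1 / 2) (2 * r) * a + sigmaCoeff κ (1 / 2) (2 * r) * b) ^ m) :
    a + b ≤ 2 * ck κ r * c ^ (1 / m) := by
  rw [sigmaCoeff_half_two_mul hr hsk, ← mul_add] at h
  rw [← inv_mul_le_iff₀ (by positivity), one_div]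
  exact (le_rpow_inv_iff_of_pos (by positivity) hc hm).2 h

def IsCDDensity (I : Set ℝ) (N K : ℝ) (ρ : ℝ → ℝ) : Prop :=
  ∀ s ∈ I, ∀ t ∈ I, s < t →
    (0 < K → t - s < π * √((N - 1) / K)) →
    ∀ lam ∈ Set.Ioo (0 : ℝ) 1,
      ρ ((1 - lam) * s + lam * t) ≥
        (sigmaCoeff (K / (N - 1)) (1 - lam) (t - s) * ρ s ^ (1 / (N - 1)) +
          sigmaCoeff (K / (N - 1)) lam (t - s) * ρ t ^ (1 / (N - 1))) ^ (N - 1)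

theorem IsCDDensity.eventually_add_le {I : Set ℝ} {N K : ℝ} {ρ : ℝ → ℝ} {t : ℝ}
    (hCD : IsCDDensity I N K ρ) (hN : 1 < N) (hI : I ∈ 𝓝 t) (hρ : ∀ s, 0 ≤ ρ s) :
    ∀ᶠ ε in 𝓝[>] 0, ρ (t + ε) ^ (1 / (N - 1)) + ρ (t - ε) ^ (1 / (N - 1)) ≤
      2 * ck (K / (N - 1)) ε * ρ t ^ (1 / (N - 1)) := by
  have hI₂ : ∀ᶠ ε in 𝓝 (0 : ℝ), t - ε ∈ I ∧ t + ε ∈ I :=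
    (((continuous_sub_left t).tendsto' 0 t (sub_zero t)).eventually hI).and
      (((continuous_const_add t).tendsto' 0 t (add_zero t)).eventually hI)
  have hdiam : ∀ᶠ ε in 𝓝 (0 : ℝ), 0 < K → 2 * ε < π * √((N - 1) / K) := by
    by_cases hK : 0 < K
    · have hπ : 0 < π * √((N - 1) / K) := by positivity
      filter_upwards [((continuous_const_mul 2).tendsto' 0 0 (mul_zero 2)).eventually
        (gt_mem_nhds hπ)] with ε hε _ using hε
    · exact Eventually.of_forall fun _ h => absurd h hK
  filter_upwards [eventually_sk_pos _, nhdsWithin_le_nhds (eventually_ck_pos _),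
    nhdsWithin_le_nhds hI₂, nhdsWithin_le_nhds hdiam, self_mem_nhdsWithin]
    with ε hsk hck ⟨hsI, htI⟩ hε_diam (hε : 0 < ε)
  have hcd := hCD (t - ε) hsI (t + ε) htI (by linarith)
    (fun hK => by rw [show t + ε - (t - ε) = 2 * ε by ring]; exact hε_diam hK)
    (1 / 2) ⟨by norm_num, by norm_num⟩
  rw [show (1 - 1 / 2) * (t - ε) + 1 / 2 * (t + ε) = t by ring,
    show t + ε - (t - ε) = 2 * ε by ring, show (1 : ℝ) - 1 / 2 = 1 / 2 by norm_num] at hcd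
  rw [add_comm]
  exact add_le_two_mul_ck_mul_of_le_rpow (sub_pos.2 hN) hε.ne' hsk.ne' hck
    (rpow_nonneg (hρ _) _) (rpow_nonneg (hρ _) _) (hρ t) hcd

theorem stmt_11_general (I : Set ℝ) (hI_open : IsOpen I)
    (N K : ℝ) (hN : 1 < N)
    (ψ : ℝ → ℝ) (hψ : ContDiffOn ℝ 2 ψ I)
    (ρ : ℝ → ℝ) (hρ : ∀ t, ρ t = Real.exp (-ψ t))
    (hCD : ∀ s ∈ I, ∀ t ∈ I, s < t →
      (0 < K → t - s < Real.pi * Real.sqrt ((N - 1) / K)) →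
      ∀ lam ∈ Set.Ioo (0 : ℝ) 1,
        ρ ((1 - lam) * s + lam * t) ≥
          (sigmaCoeff (K / (N - 1)) (1 - lam) (t - s) * ρ s ^ (1 / (N - 1)) +
            sigmaCoeff (K / (N - 1)) lam (t - s) * ρ t ^ (1 / (N - 1))) ^ (N - 1)) :
    ∀ t ∈ I, deriv (deriv ψ) t - (deriv ψ t) ^ 2 / (N - 1) ≥ K := by
  intro t ht
  have hm : 0 < N - 1 := sub_pos.2 hN
  set c := -(N - 1)⁻¹ with hc
  have hρ_rpow : ∀ s, ρ s ^ (1 / (N - 1)) = exp (c * ψ s) := fun s => by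
    rw [hρ, ← exp_mul, hc]
    ring_nf
  have hmid := IsCDDensity.eventually_add_le hCD hN (hI_open.mem_nhds ht)
    fun s => by rw [hρ]; positivity
  simp only [hρ_rpow] at hmid
  have hψt : ContDiffAt ℝ 2 ψ t := hψ.contDiffAt (hI_open.mem_nhds ht)
  have hf'' := deriv_deriv_le_neg_mul_of_add_le (f := fun s => exp (c * ψ s)) (by fun_prop) hmid
  rw [deriv_deriv_exp_comp (by fun_prop)] at hf''
  simp only [deriv_const_mul_field'] at hf''
  have hcoef : (c * deriv ψ t) ^ 2 + c * deriv (deriv ψ) t ≤ -(K / (N - 1)) :=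
    le_of_mul_le_mul_left (hf''.trans_eq (mul_comm _ _)) (exp_pos _)
  rw [hc] at hcoef
  field_simp at hcoef
  rw [ge_iff_le, le_sub_iff_add_le, ← le_sub_iff_add_le', div_le_iff₀ hm]
  linarith

/-- The one-dimensional curvature-dimension inequality `CD(K,N)` for a smooth density
`ρ = e^{−ψ}` on an open interval implies the differential inequality
`ψ'' − (ψ')²/(N−1) ≥ K`. -/
theorem stmt_11 (I : Set ℝ) (hI_open : IsOpen I) (hI_conn : I.OrdConnected)
    (N K : ℝ) (hN : 1 < N)
    (ψ : ℝ → ℝ) (hψ : ContDiffOn ℝ 2 ψ I)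
    (ρ : ℝ → ℝ) (hρ : ∀ t, ρ t = Real.exp (-ψ t))
    (hCD : ∀ s ∈ I, ∀ t ∈ I, s < t →
      (0 < K → t - s < Real.pi * Real.sqrt ((N - 1) / K)) →
      ∀ lam ∈ Set.Ioo (0 : ℝ) 1,
        ρ ((1 - lam) * s + lam * t) ≥
          (sigmaCoeff (K / (N - 1)) (1 - lam) (t - s) * ρ s ^ (1 / (N - 1)) +
            sigmaCoeff (K / (N - 1)) lam (t - s) * ρ t ^ (1 / (N - 1))) ^ (N - 1)) :
    ∀ t ∈ I, deriv (deriv ψ) t - (deriv ψ t) ^ 2 / (N - 1) ≥ K :=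
  stmt_11_general I hI_open N K hN ψ hψ ρ hρ hCD
end

section
/- For every ε > 0 there exists a function G : ℝⁿ → ℝ such that: G is C^∞ on ℝⁿ ∖ {0}; G(cx) = c·G(x) for all x ∈ ℝⁿ and c > 0; ‖x‖ ≤ G(x) ≤ (1+ε)‖x‖ for all x ∈ ℝⁿ; G is convex; and for every x ≠ 0 the second derivative of the function G² at x is positive definite as a symmetric bilinear form on ℝⁿ. -/
open Real Finset Filter Topology

/-- Key shift lemma: `‖v‖_p + t ≤ ‖v + t·𝟙‖_p` for nonneg `v`, `t ≥ 0`, `p ≥ 2`. -/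
lemma lp_shift {N : ℕ} (hN : 0 < N) {p : ℝ} (hp : 2 ≤ p) (v : Fin N → ℝ)
    (hv : ∀ i, 0 ≤ v i) {t : ℝ} (ht : 0 ≤ t) :
    (∑ i, v i ^ p) ^ (1/p) + t ≤ (∑ i, (v i + t) ^ p) ^ (1/p) := by
  have hp1 : (1:ℝ) < p := by linarith
  have hp0 : (0:ℝ) < p := by linarith
  set s : ℝ := (∑ i, v i ^ p) ^ (1/p) with hs
  have hsum_nonneg : 0 ≤ ∑ i, v i ^ p :=
    Finset.sum_nonneg fun i _ => rpow_nonneg (hv i) p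
  have hs_nonneg : 0 ≤ s := rpow_nonneg hsum_nonneg _
  have hsp : s ^ p = ∑ i, v i ^ p := by
    rw [hs, ← Real.rpow_mul hsum_nonneg, one_div_mul_cancel (ne_of_gt hp0), Real.rpow_one]
  set R : ℝ := (∑ i, (v i + t) ^ p) ^ (1/p) with hR
  have hRHS_nonneg : 0 ≤ R :=
    rpow_nonneg (Finset.sum_nonneg fun i _ => rpow_nonneg (add_nonneg (hv i) ht) p) _
  rcases eq_or_lt_of_le hs_nonneg with h0 | hspos
  · -- s = 0 : all v i = 0
    have hvi : ∀ i, v i = 0 := by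
      intro i
      by_contra hne
      have hvipos : 0 < v i ^ p := rpow_pos_of_pos (lt_of_le_of_ne (hv i) (Ne.symm hne)) p
      have : 0 < ∑ i, v i ^ p :=
        Finset.sum_pos' (fun j _ => rpow_nonneg (hv j) p) ⟨i, Finset.mem_univ i, hvipos⟩
      have : 0 < s := rpow_pos_of_pos this _
      linarith [h0]
    have hsum : ∑ i, (v i + t) ^ p = (N : ℝ) * t ^ p := by
      rw [Finset.sum_congr rfl fun i _ => by rw [hvi i, zero_add]]
      simp [Finset.sum_const, Finset.card_univ]
    have hszero : s = 0 := h0.symm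
    rw [hszero, zero_add, hR, hsum]
    have hN1 : (1:ℝ) ≤ (N:ℝ) := by exact_mod_cast hN
    calc t = 1 * t := (one_mul t).symm
      _ ≤ (N:ℝ) ^ (1/p) * t := by
          apply mul_le_mul_of_nonneg_right _ ht
          exact Real.one_le_rpow hN1 (by positivity)
      _ = ((N:ℝ) * t ^ p) ^ (1/p) := by
          rw [Real.mul_rpow (by positivity) (rpow_nonneg ht p),
            ← Real.rpow_mul ht, mul_one_div_cancel (ne_of_gt hp0), Real.rpow_one]
  · -- s > 0 : Hölder argument
    set q : ℝ := p / (p - 1) with hq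
    have hpq : p.HolderConjugate q := Real.HolderConjugate.conjExponent hp1
    have holder := Real.inner_le_Lp_mul_Lq_of_nonneg (Finset.univ (α := Fin N))
      (f := fun i => v i ^ (p-1)) (g := fun i => v i + t) hpq.symm
      (fun i _ => rpow_nonneg (hv i) _) (fun i _ => add_nonneg (hv i) ht)
    have hq_eq : ∀ i : Fin N, (v i ^ (p-1)) ^ q = v i ^ p := by
      intro i
      rw [← Real.rpow_mul (hv i)]
      congr 1
      rw [hq, mul_div_assoc']
      exact mul_div_cancel_left₀ p (by linarith : p - 1 ≠ 0)
    have hmul_eq : ∀ i : Fin N, v i ^ (p-1) * v i = v i ^ p := by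
      intro i
      rcases eq_or_lt_of_le (hv i) with h | h
      · rw [← h, Real.zero_rpow (by linarith : p - 1 ≠ 0), Real.zero_rpow (ne_of_gt hp0), mul_zero]
      · rw [← Real.rpow_add_one (ne_of_gt h), sub_add_cancel]
    have hvle : ∀ i, v i ≤ s := by
      intro i
      by_contra hlt
      push_neg at hlt
      have : s ^ p < v i ^ p := Real.rpow_lt_rpow hs_nonneg hlt hp0
      have h2 : v i ^ p ≤ ∑ j, v j ^ p :=
        Finset.single_le_sum (fun j _ => rpow_nonneg (hv j) p) (Finset.mem_univ i)
      rw [hsp] at this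
      linarith
    have hsps : s ^ p = s ^ (p-1) * s := by
      rw [← Real.rpow_add_one (ne_of_gt hspos) (p-1), sub_add_cancel]
    have hsum_pm1 : s ^ (p-1) ≤ ∑ i, v i ^ (p-1) := by
      have h1 : s ^ p ≤ s * ∑ i, v i ^ (p-1) := by
        rw [hsp, Finset.mul_sum]
        apply Finset.sum_le_sum
        intro i _
        rw [← hmul_eq i, mul_comm]
        exact mul_le_mul_of_nonneg_right (hvle i) (rpow_nonneg (hv i) _)
      rw [hsps, mul_comm (s ^ (p-1)) s] at h1
      exact le_of_mul_le_mul_left h1 hspos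
    -- assemble
    have hLHS : ∑ i, v i ^ (p-1) * (v i + t) = s ^ p + t * ∑ i, v i ^ (p-1) := by
      have : ∀ i : Fin N, v i ^ (p-1) * (v i + t) = v i ^ p + t * v i ^ (p-1) := by
        intro i
        rw [mul_add, hmul_eq i, mul_comm (v i ^ (p-1)) t]
      rw [Finset.sum_congr rfl fun i _ => this i, Finset.sum_add_distrib, ← Finset.mul_sum, hsp]
    have hfactor : (∑ i : Fin N, (v i ^ (p - 1)) ^ q) ^ (1 / q) = s ^ (p-1) := by
      rw [Finset.sum_congr rfl fun i _ => hq_eq i, ← hsp, ← Real.rpow_mul hs_nonneg]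
      congr 1
      rw [hq, one_div_div, mul_div_assoc']
      exact mul_div_cancel_left₀ (p-1) (ne_of_gt hp0)
    rw [hLHS, hfactor, ← hR] at holder
    have hspm1_pos : 0 < s ^ (p-1) := Real.rpow_pos_of_pos hspos _
    have hkey : s ^ (p-1) * (s + t) ≤ s ^ (p-1) * R := by
      calc s ^ (p-1) * (s + t) = s ^ (p-1) * s + t * s ^ (p-1) := by ring
        _ ≤ s ^ p + t * ∑ i, v i ^ (p-1) := by
            rw [hsps]
            exact add_le_add le_rfl (mul_le_mul_of_nonneg_left hsum_pm1 ht)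
        _ ≤ s ^ (p-1) * R := holder
    exact le_of_mul_le_mul_left hkey hspm1_pos

lemma sqrt2D {δ a1 a2 b1 b2 : ℝ} (hδ : 0 ≤ δ) (ha1 : 0 ≤ a1) (ha2 : 0 ≤ a2)
    (hb1 : 0 ≤ b1) (hb2 : 0 ≤ b2) :
    Real.sqrt ((a1+a2)^2 + δ*(b1+b2)^2) ≤
      Real.sqrt (a1^2 + δ*b1^2) + Real.sqrt (a2^2 + δ*b2^2) := by
  set s1 := Real.sqrt (a1^2 + δ*b1^2) with hs1
  set s2 := Real.sqrt (a2^2 + δ*b2^2) with hs2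
  have hs1n : 0 ≤ s1 := Real.sqrt_nonneg _
  have hs2n : 0 ≤ s2 := Real.sqrt_nonneg _
  have hs1sq : s1^2 = a1^2 + δ*b1^2 := Real.sq_sqrt (by positivity)
  have hs2sq : s2^2 = a2^2 + δ*b2^2 := Real.sq_sqrt (by positivity)
  have hcross : a1*a2 + δ*(b1*b2) ≤ s1*s2 := by
    have h1 : (a1*a2 + δ*(b1*b2))^2 ≤ (s1*s2)^2 := by
      rw [mul_pow, hs1sq, hs2sq]
      nlinarith [sq_nonneg (a1*b2 - a2*b1), sq_nonneg (a1*b2 + a2*b1)]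
    have h2 : 0 ≤ a1*a2 + δ*(b1*b2) := by positivity
    nlinarith [mul_nonneg hs1n hs2n]
  have hle : (a1+a2)^2 + δ*(b1+b2)^2 ≤ (s1+s2)^2 := by nlinarith
  calc Real.sqrt ((a1+a2)^2 + δ*(b1+b2)^2) ≤ Real.sqrt ((s1+s2)^2) := Real.sqrt_le_sqrt hle
    _ = s1 + s2 := Real.sqrt_sq (by positivity)

lemma sublinear_convexOn {n : ℕ} {G : (Fin n → ℝ) → ℝ}
    (hom : ∀ (x : Fin n → ℝ) (c : ℝ), 0 < c → G (c • x) = c * G x)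
    (tri : ∀ x y, G (x + y) ≤ G x + G y) : ConvexOn ℝ Set.univ G := by
  refine ⟨convex_univ, ?_⟩
  intro x _ y _ a b ha hb hab
  rcases eq_or_lt_of_le ha with h0 | hapos
  · have hb1 : b = 1 := by linarith
    simp [← h0, hb1]
  rcases eq_or_lt_of_le hb with h0 | hbpos
  · have ha1 : a = 1 := by linarith
    simp [← h0, ha1]
  calc G (a • x + b • y) ≤ G (a • x) + G (b • y) := tri _ _
    _ = a * G x + b * G y := by rw [hom x a hapos, hom y b hbpos]

lemma conv2 {E : Type*} [NormedAddCommGroup E] [NormedSpace ℝ E] {f : E → ℝ}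
    (hconv : ConvexOn ℝ Set.univ f) {x v : E}
    (hf : ∀ᶠ y in nhds x, DifferentiableAt ℝ f y)
    (hf' : DifferentiableAt ℝ (fderiv ℝ f) x) :
    0 ≤ fderiv ℝ (fderiv ℝ f) x v v := by
  set line : ℝ → E := fun t => t • v + x with hline_def
  set φ : ℝ → ℝ := fun t => f (line t) with hφ_def
  set ψ : ℝ → ℝ := fun t => fderiv ℝ f (line t) v with hψ_def
  have hline_deriv : ∀ t : ℝ, HasDerivAt line v t := by
    intro t
    simpa [hline_def] using ((hasDerivAt_id t).smul_const v).add_const x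
  have hline_cont : Continuous line := by
    have : ∀ t, ContinuousAt line t := fun t => (hline_deriv t).continuousAt
    exact continuous_iff_continuousAt.2 this
  have hline0 : line 0 = x := by simp [hline_def]
  -- eventually differentiable along the line
  have htend : Filter.Tendsto line (nhds 0) (nhds x) := by
    have := hline_cont.tendsto 0
    rwa [hline0] at this
  have hev : ∀ᶠ t in nhds (0:ℝ), DifferentiableAt ℝ f (line t) := htend.eventually hf
  obtain ⟨δ, hδpos, hδ⟩ := Metric.eventually_nhds_iff.1 hev
  set S : Set ℝ := Set.Ioo (-δ) δ with hS_def
  have hS0 : (0:ℝ) ∈ S := by constructor <;> simp [hδpos]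
  have hdiff : ∀ t ∈ S, DifferentiableAt ℝ f (line t) := by
    intro t ht
    apply hδ
    rw [Real.dist_eq, sub_zero]
    exact abs_lt.2 ⟨ht.1, ht.2⟩
  -- φ is convex
  have hφconv : ConvexOn ℝ Set.univ φ := by
    have haff := hconv.comp_affineMap (AffineMap.lineMap x (x + v) : ℝ →ᵃ[ℝ] E)
    have : (f ∘ (AffineMap.lineMap x (x + v) : ℝ →ᵃ[ℝ] E)) = φ := by
      funext t
      simp [hφ_def, hline_def, AffineMap.lineMap_apply, add_comm]
    rw [this] at haff
    simpa using haff
  -- φ has derivative ψ t on S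
  have hφderiv : ∀ t ∈ S, HasDerivAt φ (ψ t) t := by
    intro t ht
    exact ((hdiff t ht).hasFDerivAt).comp_hasDerivAt t (hline_deriv t)
  have hφdiff : ∀ t ∈ S, DifferentiableAt ℝ φ t := fun t ht => (hφderiv t ht).differentiableAt
  have hmono : MonotoneOn (deriv φ) S :=
    (hφconv.subset (Set.subset_univ S) (convex_Ioo _ _)).monotoneOn_deriv hφdiff
  -- ψ has derivative B v v at 0
  have hψderiv : HasDerivAt ψ (fderiv ℝ (fderiv ℝ f) x v v) 0 := by
    have hc : HasDerivAt (fun t => fderiv ℝ f (line t)) (fderiv ℝ (fderiv ℝ f) x v) 0 := by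
      have h := hf'.hasFDerivAt
      rw [← hline0] at h
      have h2 := h.comp_hasDerivAt 0 (hline_deriv 0)
      rw [hline0] at h2
      exact h2
    have := hc.clm_apply (hasDerivAt_const 0 v)
    simpa using this
  -- slopes are nonneg for t ∈ (0, δ)
  have hslope_nonneg : ∀ᶠ t in 𝓝[>] (0:ℝ), 0 ≤ slope ψ 0 t := by
    filter_upwards [Ioo_mem_nhdsGT_of_mem (by constructor <;> simp [hδpos] : (0:ℝ) ∈ Set.Ico 0 δ)]
      with t ht
    have htS : t ∈ S := ⟨by linarith [ht.1], ht.2⟩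
    have h1 : ψ 0 = deriv φ 0 := ((hφderiv 0 hS0).deriv).symm
    have h2 : ψ t = deriv φ t := ((hφderiv t htS).deriv).symm
    have h3 : deriv φ 0 ≤ deriv φ t := hmono hS0 htS (le_of_lt ht.1)
    rw [slope_def_field]
    have : 0 ≤ ψ t - ψ 0 := by rw [h1, h2]; linarith
    rw [sub_zero]
    exact div_nonneg this (le_of_lt ht.1)
  -- take limit of slopes
  have hlim : Filter.Tendsto (slope ψ 0) (𝓝[>] (0:ℝ)) (nhds (fderiv ℝ (fderiv ℝ f) x v v)) := by
    have := hasDerivAt_iff_tendsto_slope.1 hψderiv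
    exact this.mono_left (nhdsWithin_mono 0 (fun t ht => ne_of_gt ht))
  exact ge_of_tendsto hlim hslope_nonneg

section Qsec
variable {n : ℕ}

noncomputable def Mq (n : ℕ) : (Fin n → ℝ) →L[ℝ] ((Fin n → ℝ) →L[ℝ] ℝ) :=
  ∑ i : Fin n, (2:ℝ) • ((ContinuousLinearMap.proj i).smulRight
    (ContinuousLinearMap.proj i : (Fin n → ℝ) →L[ℝ] ℝ))

lemma Mq_apply (y w : Fin n → ℝ) : Mq n y w = ∑ i, 2 * (y i * w i) := by
  simp [Mq, ContinuousLinearMap.sum_apply, mul_comm, mul_assoc]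

lemma Q_hasFDerivAt (y : Fin n → ℝ) :
    HasFDerivAt (fun z : Fin n → ℝ => ∑ i, z i * z i) (Mq n y) y := by
  have h : ∀ i : Fin n, HasFDerivAt (fun z : Fin n → ℝ => z i * z i)
      (y i • (ContinuousLinearMap.proj i : (Fin n → ℝ) →L[ℝ] ℝ)
        + y i • (ContinuousLinearMap.proj i : (Fin n → ℝ) →L[ℝ] ℝ)) y := by
    intro i
    have hp : HasFDerivAt (fun z : Fin n → ℝ => z i)
        (ContinuousLinearMap.proj i : (Fin n → ℝ) →L[ℝ] ℝ) y :=
      (ContinuousLinearMap.proj i : (Fin n → ℝ) →L[ℝ] ℝ).hasFDerivAt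
    exact hp.mul hp
  have hsum := HasFDerivAt.fun_sum (fun i (_ : i ∈ Finset.univ) => h i)
  refine hsum.congr_fderiv ?_
  ext w
  simp only [Mq, ContinuousLinearMap.sum_apply, ContinuousLinearMap.add_apply,
    ContinuousLinearMap.smul_apply, ContinuousLinearMap.smulRight_apply,
    ContinuousLinearMap.proj_apply, smul_eq_mul]
  apply Finset.sum_congr rfl
  intro i _
  ring

lemma Q_fderiv : fderiv ℝ (fun z : Fin n → ℝ => ∑ i, z i * z i) = ⇑(Mq n) := by
  funext y
  exact (Q_hasFDerivAt y).fderiv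

lemma Q_second (x v : Fin n → ℝ) :
    fderiv ℝ (fderiv ℝ (fun z : Fin n → ℝ => ∑ i, z i * z i)) x v v = 2 * ∑ i, v i * v i := by
  rw [Q_fderiv, ContinuousLinearMap.fderiv, Mq_apply]
  rw [Finset.mul_sum]

lemma Q_fderiv_diffAt (x : Fin n → ℝ) :
    DifferentiableAt ℝ (fderiv ℝ (fun z : Fin n → ℝ => ∑ i, z i * z i)) x := by
  rw [Q_fderiv]
  exact (Mq n).differentiableAt

end Qsec

noncomputable section

def toEuc (n : ℕ) : (Fin n → ℝ) ≃L[ℝ] EuclideanSpace ℝ (Fin n) :=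
  (EuclideanSpace.equiv (Fin n) ℝ).symm

def Qf {n : ℕ} (x : Fin n → ℝ) : ℝ := ∑ i, x i * x i

def En {n : ℕ} (x : Fin n → ℝ) : ℝ := Real.sqrt (Qf x)

variable {n : ℕ}

lemma En_eq_norm (x : Fin n → ℝ) : En x = ‖toEuc n x‖ := by
  rw [EuclideanSpace.norm_eq, En, Qf]
  congr 1
  apply Finset.sum_congr rfl
  intro i _
  simp [toEuc, Real.norm_eq_abs]
  rw [sq]

lemma Qf_nonneg (x : Fin n → ℝ) : 0 ≤ Qf x :=
  Finset.sum_nonneg fun i _ => mul_self_nonneg _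

lemma En_nonneg (x : Fin n → ℝ) : 0 ≤ En x := Real.sqrt_nonneg _

lemma En_sq (x : Fin n → ℝ) : En x ^ 2 = Qf x := Real.sq_sqrt (Qf_nonneg x)

lemma Qf_pos {x : Fin n → ℝ} (hx : x ≠ 0) : 0 < Qf x := by
  have : ∃ i, x i ≠ 0 := by
    by_contra h
    push_neg at h
    exact hx (funext h)
  obtain ⟨i, hi⟩ := this
  exact Finset.sum_pos' (fun j _ => mul_self_nonneg _)
    ⟨i, Finset.mem_univ i, mul_pos_of_ne_zero_of_mul_self hi⟩
where
  mul_pos_of_ne_zero_of_mul_self {a : ℝ} (ha : a ≠ 0) : 0 < a * a := by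
    rcases ha.lt_or_gt with h | h
    · exact mul_pos_of_neg_of_neg h h
    · exact mul_pos h h

lemma En_pos {x : Fin n → ℝ} (hx : x ≠ 0) : 0 < En x :=
  Real.sqrt_pos.2 (Qf_pos hx)

lemma En_tri (x y : Fin n → ℝ) : En (x + y) ≤ En x + En y := by
  rw [En_eq_norm, En_eq_norm, En_eq_norm, map_add]
  exact norm_add_le _ _

lemma En_smul (c : ℝ) (x : Fin n → ℝ) : En (c • x) = |c| * En x := by
  rw [En_eq_norm, En_eq_norm, map_smul, norm_smul, Real.norm_eq_abs]

lemma Qf_smul (c : ℝ) (x : Fin n → ℝ) : Qf (c • x) = c^2 * Qf x := by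
  rw [← En_sq, ← En_sq, En_smul, mul_pow, sq_abs]

lemma coord_le_En (x : Fin n → ℝ) (i : Fin n) : |x i| ≤ En x := by
  rw [En, ← Real.sqrt_mul_self_eq_abs]
  apply Real.sqrt_le_sqrt
  exact Finset.single_le_sum (fun j (_ : j ∈ Finset.univ) => mul_self_nonneg (x j)) (Finset.mem_univ i)

lemma Qf_contDiff {m : WithTop ℕ∞} : ContDiff ℝ m (Qf (n := n)) := by
  apply ContDiff.sum
  intro i _
  exact ((ContinuousLinearMap.proj i : (Fin n → ℝ) →L[ℝ] ℝ).contDiff).mul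
    ((ContinuousLinearMap.proj i : (Fin n → ℝ) →L[ℝ] ℝ).contDiff)

lemma En_contDiffAt {m : WithTop ℕ∞} {x : Fin n → ℝ} (hx : x ≠ 0) :
    ContDiffAt ℝ m En x := by
  have hne : toEuc n x ≠ 0 := fun h => hx (by
    have := congrArg (toEuc n).symm h
    simpa using this)
  have h1 : ContDiffAt ℝ m Norm.norm (toEuc n x) := contDiffAt_norm ℝ hne
  have h2 : ContDiffAt ℝ m (fun y : Fin n → ℝ => ‖toEuc n y‖) x :=
    h1.comp x ((toEuc n).contDiff.contDiffAt)
  apply h2.congr_of_eventuallyEq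
  filter_upwards with y
  exact En_eq_norm y
end

noncomputable section Hsec
open Real Finset

variable {n N : ℕ}

def Hf (L : Fin N → ((Fin n → ℝ) →L[ℝ] ℝ)) (K p : ℝ) (x : Fin n → ℝ) : ℝ :=
  (∑ i, (L i x + K * En x) ^ p) ^ (1/p) - K * En x

variable {L : Fin N → ((Fin n → ℝ) →L[ℝ] ℝ)} {K p : ℝ}

section
variable (hN : 0 < N) (hp : 2 ≤ p) (hK0 : 0 ≤ K)
variable (hg : ∀ (i : Fin N) (x : Fin n → ℝ), En x ≤ L i x + K * En x)
include hg

lemma g_nonneg (i : Fin N) (x : Fin n → ℝ) : 0 ≤ L i x + K * En x :=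
  (En_nonneg x).trans (hg i x)

include hp

lemma rpow_rpow_inv {a : ℝ} (ha : 0 ≤ a) : (a ^ p) ^ (1/p) = a := by
  have hp0 : (0:ℝ) < p := by linarith
  rw [← Real.rpow_mul ha, mul_one_div_cancel (ne_of_gt hp0), Real.rpow_one]

lemma Hf_lower (i : Fin N) (x : Fin n → ℝ) : L i x ≤ Hf L K p x := by
  have hp0 : (0:ℝ) < p := by linarith
  have h2 : ((L i x + K * En x) ^ p) ^ (1/p) ≤ (∑ j, (L j x + K * En x) ^ p) ^ (1/p) := by
    apply Real.rpow_le_rpow (Real.rpow_nonneg (g_nonneg hg i x) p) _ (by positivity)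
    exact Finset.single_le_sum (fun j _ => Real.rpow_nonneg (g_nonneg hg j x) p) (Finset.mem_univ i)
  rw [rpow_rpow_inv hp hg (g_nonneg hg i x)] at h2
  simp only [Hf]
  linarith

lemma Hf_smul (x : Fin n → ℝ) {c : ℝ} (hc : 0 < c) : Hf L K p (c • x) = c * Hf L K p x := by
  have hp0 : (0:ℝ) < p := by linarith
  have hEn : En (c • x) = c * En x := by rw [En_smul, abs_of_pos hc]
  have hterm : ∀ i : Fin N, (L i (c • x) + K * En (c • x)) ^ p
      = c ^ p * (L i x + K * En x) ^ p := by
    intro i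
    rw [(L i).map_smul, hEn]
    rw [show (c • L i x : ℝ) + K * (c * En x) = c * (L i x + K * En x) by
      simp [smul_eq_mul]; ring]
    rw [Real.mul_rpow hc.le (g_nonneg hg i x)]
  rw [Hf, Hf, Finset.sum_congr rfl (fun i _ => hterm i), ← Finset.mul_sum,
    Real.mul_rpow (Real.rpow_nonneg hc.le p)
      (Finset.sum_nonneg fun j _ => Real.rpow_nonneg (g_nonneg hg j x) p),
    rpow_rpow_inv hp hg hc.le, hEn]
  ring

include hN hK0

lemma Hf_upper (x : Fin n → ℝ) :
    ∃ j, Hf L K p x ≤ L j x + ((N:ℝ)^(1/p) - 1) * (L j x + K * En x) := by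
  have hp0 : (0:ℝ) < p := by linarith
  have hne : (Finset.univ : Finset (Fin N)).Nonempty := Finset.univ_nonempty_iff.2 ⟨⟨0, hN⟩⟩
  obtain ⟨j, _, hj⟩ := Finset.exists_mem_eq_sup' hne (fun i => L i x + K * En x)
  refine ⟨j, ?_⟩
  set m := Finset.univ.sup' hne (fun i => L i x + K * En x) with hm
  have hmax : ∀ i : Fin N, L i x + K * En x ≤ m := fun i =>
    Finset.le_sup' (fun i => L i x + K * En x) (Finset.mem_univ i)
  have hm_eq : m = L j x + K * En x := hj
  have hm_nonneg : 0 ≤ m := hm_eq ▸ g_nonneg hg j x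
  have hsum : ∑ i, (L i x + K * En x) ^ p ≤ (N:ℝ) * m ^ p := by
    calc ∑ i, (L i x + K * En x) ^ p ≤ ∑ _i : Fin N, m ^ p :=
          Finset.sum_le_sum fun i _ => Real.rpow_le_rpow (g_nonneg hg i x) (hmax i) hp0.le
      _ = (N:ℝ) * m ^ p := by simp [Finset.sum_const, Finset.card_univ, nsmul_eq_mul]
  have h2 : (∑ i, (L i x + K * En x) ^ p) ^ (1/p) ≤ (N:ℝ)^(1/p) * m := by
    calc (∑ i, (L i x + K * En x) ^ p) ^ (1/p)
        ≤ ((N:ℝ) * m ^ p) ^ (1/p) := Real.rpow_le_rpow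
          (Finset.sum_nonneg fun j _ => Real.rpow_nonneg (g_nonneg hg j x) p) hsum (by positivity)
      _ = (N:ℝ)^(1/p) * m := by
          rw [Real.mul_rpow (by positivity) (Real.rpow_nonneg hm_nonneg p),
            rpow_rpow_inv hp hg hm_nonneg]
  simp only [Hf]
  have : (∑ i, (L i x + K * En x) ^ p) ^ (1/p) - K * En x
      ≤ (N:ℝ)^(1/p) * m - K * En x := by linarith
  apply this.trans
  rw [hm_eq]
  ring_nf
  nlinarith [hm_eq, En_nonneg x]

lemma Hf_tri (x y : Fin n → ℝ) : Hf L K p (x + y) ≤ Hf L K p x + Hf L K p y := by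
  have hp0 : (0:ℝ) < p := by linarith
  have habc : En (x + y) ≤ En x + En y := En_tri x y
  have ht_nonneg : 0 ≤ K * (En x + En y - En (x + y)) := mul_nonneg hK0 (by linarith)
  have step1 := lp_shift hN hp (fun i => L i (x + y) + K * En (x + y))
    (fun i => g_nonneg hg i (x + y)) ht_nonneg
  have hvt : ∀ i : Fin N, (L i (x + y) + K * En (x + y)) + K * (En x + En y - En (x + y))
      = (L i x + K * En x) + (L i y + K * En y) := by
    intro i
    rw [(L i).map_add]
    ring
  have step2 : (∑ i, ((L i (x + y) + K * En (x + y)) + K * (En x + En y - En (x + y))) ^ p) ^ (1/p)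
      ≤ (∑ i, (L i x + K * En x) ^ p) ^ (1/p) + (∑ i, (L i y + K * En y) ^ p) ^ (1/p) := by
    rw [Finset.sum_congr rfl (fun i _ => by rw [hvt i])]
    exact Real.Lp_add_le_of_nonneg Finset.univ (by linarith : 1 ≤ p)
      (fun i _ => g_nonneg hg i x) (fun i _ => g_nonneg hg i y)
  simp only [Hf]
  linarith

lemma Hf_contDiffAt {m : WithTop ℕ∞} {x : Fin n → ℝ} (hx : x ≠ 0) :
    ContDiffAt ℝ m (Hf L K p) x := by
  have hp0 : (0:ℝ) < p := by linarith
  have hEx : 0 < En x := En_pos hx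
  have hgpos : ∀ i : Fin N, 0 < L i x + K * En x := fun i => lt_of_lt_of_le hEx (hg i x)
  have hgi : ∀ i : Fin N, ContDiffAt ℝ m (fun y => L i y + K * En y) x := by
    intro i
    exact ((L i).contDiff.contDiffAt).add (contDiffAt_const.mul (En_contDiffAt hx))
  have hsum : ContDiffAt ℝ m (fun y => ∑ i, (L i y + K * En y) ^ p) x := by
    apply ContDiffAt.sum
    intro i _
    exact (hgi i).rpow_const_of_ne (ne_of_gt (hgpos i))
  have hsum_pos : 0 < ∑ i, (L i x + K * En x) ^ p := by
    have hne : (Finset.univ : Finset (Fin N)).Nonempty := Finset.univ_nonempty_iff.2 ⟨⟨0, hN⟩⟩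
    obtain ⟨i, hi⟩ := hne
    exact Finset.sum_pos' (fun j _ => Real.rpow_nonneg (g_nonneg hg j x) p)
      ⟨i, hi, Real.rpow_pos_of_pos (hgpos i) p⟩
  exact (hsum.rpow_const_of_ne (ne_of_gt hsum_pos)).sub
    (contDiffAt_const.mul (En_contDiffAt hx))

end
end Hsec

section HB
variable {n : ℕ}

lemma F_zero (F : (Fin n → ℝ) → ℝ)
    (hF_hom : ∀ (x : Fin n → ℝ) (c : ℝ), 0 < c → F (c • x) = c * F x) : F 0 = 0 := by
  have h := hF_hom 0 2 (by norm_num)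
  rw [smul_zero] at h
  linarith

lemma F_nonneg (F : (Fin n → ℝ) → ℝ)
    (hF_pos : ∀ x : Fin n → ℝ, x ≠ 0 → 0 < F x)
    (hF_hom : ∀ (x : Fin n → ℝ) (c : ℝ), 0 < c → F (c • x) = c * F x) :
    ∀ x, 0 ≤ F x := by
  intro x
  rcases eq_or_ne x 0 with rfl | hx
  · rw [F_zero F hF_hom]
  · exact (hF_pos x hx).le

/-- Supporting functional at a point. -/
lemma exists_support (F : (Fin n → ℝ) → ℝ)
    (hF_pos : ∀ x : Fin n → ℝ, x ≠ 0 → 0 < F x)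
    (hF_hom : ∀ (x : Fin n → ℝ) (c : ℝ), 0 < c → F (c • x) = c * F x)
    (hF_tri : ∀ x y : Fin n → ℝ, F (x + y) ≤ F x + F y)
    {u : Fin n → ℝ} (hu : u ≠ 0) :
    ∃ g : (Fin n → ℝ) →ₗ[ℝ] ℝ, g u = F u ∧ ∀ x, g x ≤ F x := by
  have hF0 : F 0 = 0 := F_zero F hF_hom
  have key : ∀ x : (LinearPMap.mkSpanSingleton (K := ℝ) (L := ℝ) (σ := RingHom.id ℝ) u (F u) hu).domain,
      (LinearPMap.mkSpanSingleton (K := ℝ) (L := ℝ) (σ := RingHom.id ℝ) u (F u) hu) x ≤ F x := by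
    rintro ⟨x, hx⟩
    obtain ⟨t, rfl⟩ := Submodule.mem_span_singleton.1 hx
    have happ : (LinearPMap.mkSpanSingleton (K := ℝ) (L := ℝ) (σ := RingHom.id ℝ) u (F u) hu)
        ⟨t • u, Submodule.smul_mem _ t (Submodule.mem_span_singleton_self u)⟩ = t • (F u) := by
      exact LinearPMap.mkSpanSingleton'_apply u (F u) _ t _
    rw [happ]
    rcases lt_trichotomy t 0 with htn | rfl | htp
    · -- t < 0 : t * F u ≤ F (t • u) since F(tu) + (-t)F(u) ≥ F 0 = 0
      have h1 : F (t • u + (-t) • u) ≤ F (t • u) + F ((-t) • u) := hF_tri _ _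
      have h2 : t • u + (-t) • u = 0 := by rw [← add_smul]; simp
      rw [h2, hF0, hF_hom u (-t) (by linarith)] at h1
      simp only [smul_eq_mul]
      linarith
    · simp [hF0]
    · rw [hF_hom u t htp]; simp
  obtain ⟨g, hg_ext, hg_le⟩ := exists_extension_of_le_sublinear _ F
    (fun c hc x => hF_hom x c hc) hF_tri key
  refine ⟨g, ?_, hg_le⟩
  have := hg_ext ⟨u, Submodule.mem_span_singleton_self u⟩
  rw [this, LinearPMap.mkSpanSingleton_apply]

/-- Finite family of continuous linear functionals sandwiching F. -/
lemma exists_finite_family (hn : 1 ≤ n) (F : (Fin n → ℝ) → ℝ) (hF_cont : Continuous F)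
    (hF_pos : ∀ x : Fin n → ℝ, x ≠ 0 → 0 < F x)
    (hF_hom : ∀ (x : Fin n → ℝ) (c : ℝ), 0 < c → F (c • x) = c * F x)
    (hF_tri : ∀ x y : Fin n → ℝ, F (x + y) ≤ F x + F y)
    {τ : ℝ} (hτ : 0 < τ) :
    ∃ (N : ℕ) (_ : 0 < N) (L : Fin N → ((Fin n → ℝ) →L[ℝ] ℝ)),
      (∀ i x, L i x ≤ (1+τ) * F x) ∧ (∀ x, ∃ i, F x ≤ L i x) := by
  have hF0 : F 0 = 0 := F_zero F hF_hom
  have hFnn := F_nonneg F hF_pos hF_hom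
  set δ' : ℝ := τ / (1 + τ) with hδ'
  have hδ'pos : 0 < δ' := by positivity
  have hδ'lt : δ' < 1 := by
    rw [hδ', div_lt_one (by linarith)]; linarith
  have hfrac : 1 - δ' = 1 / (1 + τ) := by
    rw [hδ']; field_simp; ring
  set S : Set (Fin n → ℝ) := Metric.sphere 0 1 with hS
  haveI : Nontrivial (Fin n → ℝ) := by
    refine ⟨fun _ => 0, fun _ => 1, fun h => ?_⟩
    have := congrFun h ⟨0, hn⟩
    norm_num at this
  have hS_ne : S.Nonempty := NormedSpace.sphere_nonempty.2 (by norm_num)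
  have hS_cpt : IsCompact S := isCompact_sphere 0 1
  -- choose supporting functionals
  have hmem_ne : ∀ u ∈ S, u ≠ 0 := by
    intro u hu h0
    rw [hS] at hu
    simp [h0] at hu
  choose g hg_eq hg_le using fun (u : S) =>
    exists_support F hF_pos hF_hom hF_tri (hmem_ne u u.2)
  set gc : S → ((Fin n → ℝ) →L[ℝ] ℝ) := fun u => LinearMap.toContinuousLinearMap (g u) with hgc
  set U : S → Set (Fin n → ℝ) := fun u => {y | (1 - δ') * F y < gc u y} with hU
  have hU_open : ∀ u, IsOpen (U u) := by
    intro u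
    have : U u = (fun y => gc u y - (1 - δ') * F y) ⁻¹' (Set.Ioi 0) := by
      ext y; simp [hU, sub_pos]
    rw [this]
    exact (((gc u).continuous).sub (continuous_const.mul hF_cont)).isOpen_preimage _ isOpen_Ioi
  have hcover : S ⊆ ⋃ u : S, U u := by
    intro y hy
    refine Set.mem_iUnion.2 ⟨⟨y, hy⟩, ?_⟩
    have hFy : 0 < F y := hF_pos y (hmem_ne y hy)
    have : gc ⟨y, hy⟩ y = F y := hg_eq ⟨y, hy⟩
    rw [hU]
    simp only [Set.mem_setOf_eq]
    rw [this]
    nlinarith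
  obtain ⟨T, hT⟩ := hS_cpt.elim_finite_subcover U hU_open hcover
  have hT_ne : T.Nonempty := by
    obtain ⟨u0, hu0⟩ := hS_ne
    obtain ⟨i, hiT, -⟩ := Set.mem_iUnion₂.1 (hT hu0)
    exact ⟨i, hiT⟩
  set N := T.card with hN
  have hNpos : 0 < N := Finset.card_pos.2 hT_ne
  set e := T.equivFin with he
  set L : Fin N → ((Fin n → ℝ) →L[ℝ] ℝ) := fun k => (1 + τ) • gc (e.symm k : T) with hL
  refine ⟨N, hNpos, L, ?_, ?_⟩
  · intro i x
    have h := hg_le (e.symm i : T) x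
    have : gc (e.symm i : T) x ≤ F x := h
    simp only [hL, ContinuousLinearMap.smul_apply, smul_eq_mul]
    nlinarith
  · intro x
    rcases eq_or_ne x 0 with rfl | hx
    · refine ⟨⟨0, hNpos⟩, ?_⟩
      simp [hF0]
    · set c : ℝ := ‖x‖ with hc
      have hcpos : 0 < c := by rw [hc]; exact norm_pos_iff.2 hx
      set y : Fin n → ℝ := c⁻¹ • x with hy
      have hyS : y ∈ S := by
        rw [hS, mem_sphere_iff_norm, sub_zero, hy, norm_smul]
        simp [abs_of_pos (inv_pos.2 hcpos), hc, inv_mul_cancel₀ (ne_of_gt hcpos), inv_mul_cancel₀ (ne_of_gt (norm_pos_iff.2 hx))]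
      obtain ⟨u, huT, huy⟩ := Set.mem_iUnion₂.1 (hT hyS)
      refine ⟨e ⟨u, huT⟩, ?_⟩
      have huy' : (1 - δ') * F y < gc u y := huy
      have hxy : x = c • y := by
        rw [hy, smul_smul, mul_inv_cancel₀ (ne_of_gt hcpos), one_smul]
      have hFx : F x = c * F y := by rw [hxy]; exact hF_hom y c hcpos
      have hLx : L (e ⟨u, huT⟩) x = c * ((1+τ) * gc u y) := by
        simp only [hL, Equiv.symm_apply_apply]
        rw [hxy]
        rw [ContinuousLinearMap.smul_apply, ContinuousLinearMap.map_smul]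
        simp [smul_eq_mul]
        ring
      rw [hFx, hLx]
      have h1τ : (1 - δ') * (1 + τ) = 1 := by
        rw [hfrac]; field_simp
      have hFy : 0 ≤ F y := hFnn y
      have hfin : F y ≤ (1+τ) * gc u y := by nlinarith
      exact mul_le_mul_of_nonneg_left hfin hcpos.le
end HB

section extra2
variable {n : ℕ}
-- test convexOn_sq
lemma convexOn_sq_of {f : (Fin n → ℝ) → ℝ} (hconv : ConvexOn ℝ Set.univ f)
    (hnn : ∀ x, 0 ≤ f x) : ConvexOn ℝ Set.univ (fun y => f y ^ 2) := by
  refine ⟨convex_univ, ?_⟩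
  intro x _ y _ a b ha hb hab
  have h := hconv.2 (Set.mem_univ x) (Set.mem_univ y) ha hb hab
  simp only [smul_eq_mul] at h ⊢
  have h2 : f (a • x + b • y) ^ 2 ≤ (a * f x + b * f y) ^ 2 := by
    apply pow_le_pow_left₀ (hnn _) h
  apply h2.trans
  have hb1 : b = 1 - a := by linarith
  nlinarith [mul_nonneg ha hb, sq_nonneg (f x - f y)]

-- bound of CLM by En
lemma clm_bound (T : (Fin n → ℝ) →L[ℝ] ℝ) (x : Fin n → ℝ) :
    |T x| ≤ (∑ j, |T (fun k => if j = k then (1:ℝ) else 0)|) * En x := by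
  have hx : x = ∑ i, x i • (fun k => if i = k then (1:ℝ) else 0) := pi_eq_sum_univ x
  have hTx : T x = ∑ i, x i * T (fun k => if i = k then (1:ℝ) else 0) := by
    conv_lhs => rw [hx]
    rw [map_sum]
    apply Finset.sum_congr rfl
    intro i _
    rw [T.map_smul, smul_eq_mul]
  rw [hTx, Finset.sum_mul]
  apply (Finset.abs_sum_le_sum_abs _ _).trans
  apply Finset.sum_le_sum
  intro i _
  rw [abs_mul]
  calc |x i| * |T _| ≤ En x * |T _| :=
        mul_le_mul_of_nonneg_right (coord_le_En x i) (abs_nonneg _)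
    _ = |T _| * En x := mul_comm _ _

end extra2

section Qwrap
variable {n : ℕ}
lemma Qf_hasFDerivAt (y : Fin n → ℝ) : HasFDerivAt (Qf (n := n)) (Mq n y) y := Q_hasFDerivAt y
lemma Qf_second (x v : Fin n → ℝ) : fderiv ℝ (fderiv ℝ (Qf (n := n))) x v v = 2 * Qf v :=
  Q_second x v
lemma Qf_fderiv_diffAt (x : Fin n → ℝ) : DifferentiableAt ℝ (fderiv ℝ (Qf (n := n))) x :=
  Q_fderiv_diffAt x
end Qwrap

set_option maxHeartbeats 1600000 in
/-- Every (possibly non-symmetric) norm on `ℝⁿ` can be approximated from above, up to a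
factor `1 + ε`, by a Minkowski norm: a positively 1-homogeneous convex function, smooth
away from the origin, whose square has positive definite second derivative away from the
origin. -/
theorem stmt_19 (n : ℕ) (hn : 1 ≤ n)
    (F : (Fin n → ℝ) → ℝ) (hF_cont : Continuous F)
    (hF_pos : ∀ x : Fin n → ℝ, x ≠ 0 → 0 < F x)
    (hF_hom : ∀ (x : Fin n → ℝ) (c : ℝ), 0 < c → F (c • x) = c * F x)
    (hF_tri : ∀ x y : Fin n → ℝ, F (x + y) ≤ F x + F y)
    (ε : ℝ) (hε : 0 < ε) :
    ∃ G : (Fin n → ℝ) → ℝ,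
      ContDiffOn ℝ (⊤ : ℕ∞) G {(0 : Fin n → ℝ)}ᶜ ∧
      (∀ (x : Fin n → ℝ) (c : ℝ), 0 < c → G (c • x) = c * G x) ∧
      (∀ x : Fin n → ℝ, F x ≤ G x ∧ G x ≤ (1 + ε) * F x) ∧
      ConvexOn ℝ Set.univ G ∧
      (∀ x : Fin n → ℝ, x ≠ 0 → ∀ v : Fin n → ℝ, v ≠ 0 →
        0 < iteratedFDeriv ℝ 2 (fun y => G y ^ 2) x ![v, v]) := by
  classical
  have hF0 : F 0 = 0 := F_zero F hF_hom
  have hFnn : ∀ x, 0 ≤ F x := F_nonneg F hF_pos hF_hom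
  haveI : Nontrivial (Fin n → ℝ) := by
    refine ⟨fun _ => 0, fun _ => 1, fun h => ?_⟩
    have := congrFun h ⟨0, hn⟩
    norm_num at this
  have hS_ne : (Metric.sphere (0 : Fin n → ℝ) 1).Nonempty :=
    NormedSpace.sphere_nonempty.2 (by norm_num)
  have hS_cpt : IsCompact (Metric.sphere (0 : Fin n → ℝ) 1) := isCompact_sphere 0 1
  obtain ⟨x₀, hx₀S, hx₀min⟩ := hS_cpt.exists_isMinOn hS_ne hF_cont.continuousOn
  obtain ⟨x₁, hx₁S, hx₁max⟩ := hS_cpt.exists_isMaxOn hS_ne hF_cont.continuousOn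
  have hsphere_ne_zero : ∀ y ∈ Metric.sphere (0 : Fin n → ℝ) 1, y ≠ 0 := by
    intro y hy h0
    rw [mem_sphere_iff_norm, sub_zero, h0] at hy
    norm_num at hy
  have hc₀ : 0 < F x₀ := hF_pos x₀ (hsphere_ne_zero x₀ hx₀S)
  have hM₀ : 0 < F x₁ := hF_pos x₁ (hsphere_ne_zero x₁ hx₁S)
  have hlow : ∀ x, F x₀ * ‖x‖ ≤ F x := by
    intro x
    rcases eq_or_ne x 0 with rfl | hx
    · simp [hF0]
    · have hnx : 0 < ‖x‖ := norm_pos_iff.2 hx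
      have hmem : ‖x‖⁻¹ • x ∈ Metric.sphere (0 : Fin n → ℝ) 1 := by
        rw [mem_sphere_iff_norm, sub_zero, norm_smul, Real.norm_eq_abs,
          abs_of_pos (inv_pos.2 hnx), inv_mul_cancel₀ (ne_of_gt hnx)]
      have h1 : F x₀ ≤ F (‖x‖⁻¹ • x) := isMinOn_iff.mp hx₀min _ hmem
      rw [hF_hom x ‖x‖⁻¹ (inv_pos.2 hnx)] at h1
      calc F x₀ * ‖x‖ ≤ (‖x‖⁻¹ * F x) * ‖x‖ := mul_le_mul_of_nonneg_right h1 hnx.le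
        _ = F x := by field_simp
  have hup : ∀ x, F x ≤ F x₁ * ‖x‖ := by
    intro x
    rcases eq_or_ne x 0 with rfl | hx
    · simp [hF0]
    · have hnx : 0 < ‖x‖ := norm_pos_iff.2 hx
      have hmem : ‖x‖⁻¹ • x ∈ Metric.sphere (0 : Fin n → ℝ) 1 := by
        rw [mem_sphere_iff_norm, sub_zero, norm_smul, Real.norm_eq_abs,
          abs_of_pos (inv_pos.2 hnx), inv_mul_cancel₀ (ne_of_gt hnx)]
      have h1 : F (‖x‖⁻¹ • x) ≤ F x₁ := isMaxOn_iff.mp hx₁max _ hmem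
      rw [hF_hom x ‖x‖⁻¹ (inv_pos.2 hnx)] at h1
      have := mul_le_mul_of_nonneg_left h1 hnx.le
      rw [← mul_assoc, mul_inv_cancel₀ (ne_of_gt hnx), one_mul] at this
      linarith [this]
  have h_inf_En : ∀ x : Fin n → ℝ, ‖x‖ ≤ En x := by
    intro x
    apply (pi_norm_le_iff_of_nonneg (En_nonneg x)).2
    intro i
    rw [Real.norm_eq_abs]
    exact coord_le_En x i
  have h_En_inf : ∀ x : Fin n → ℝ, En x ≤ Real.sqrt n * ‖x‖ := by
    intro x
    have hQ : Qf x ≤ (n : ℝ) * ‖x‖^2 := by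
      rw [Qf]
      calc ∑ i, x i * x i ≤ ∑ _i : Fin n, ‖x‖^2 := by
            apply Finset.sum_le_sum
            intro i _
            have habs : |x i| ≤ ‖x‖ := by
              rw [← Real.norm_eq_abs]
              exact norm_le_pi_norm x i
            nlinarith [abs_nonneg (x i), le_abs_self (x i), neg_abs_le (x i)]
        _ = (n : ℝ) * ‖x‖^2 := by
            simp [Finset.sum_const, Finset.card_univ, nsmul_eq_mul]
    calc En x = Real.sqrt (Qf x) := rfl
      _ ≤ Real.sqrt ((n : ℝ) * ‖x‖^2) := Real.sqrt_le_sqrt hQ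
      _ = Real.sqrt n * ‖x‖ := by
          rw [Real.sqrt_mul (by positivity), Real.sqrt_sq (norm_nonneg x)]
  have hsqrtn_pos : 0 < Real.sqrt n := Real.sqrt_pos.2 (by exact_mod_cast hn)
  set c : ℝ := F x₀ / Real.sqrt n with hcdef
  have hc : 0 < c := by positivity
  have hcEn : ∀ x, c * En x ≤ F x := by
    intro x
    calc c * En x ≤ c * (Real.sqrt n * ‖x‖) :=
          mul_le_mul_of_nonneg_left (h_En_inf x) hc.le
      _ = F x₀ * ‖x‖ := by
          rw [hcdef]
          field_simp
      _ ≤ F x := hlow x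
  have hMEn : ∀ x, F x ≤ F x₁ * En x := fun x =>
    (hup x).trans (mul_le_mul_of_nonneg_left (h_inf_En x) hM₀.le)
  -- finite family of functionals
  set τ : ℝ := ε / 4 with hτdef
  have hτ : 0 < τ := by positivity
  obtain ⟨N, hNpos, L, hLup, hLlow⟩ :=
    exists_finite_family hn F hF_cont hF_pos hF_hom hF_tri hτ
  -- the constant K
  set K : ℝ := 1 + ∑ i, ∑ j, |L i (fun k => if j = k then (1:ℝ) else 0)| with hKdef
  have hKsum_nonneg : 0 ≤ ∑ i, ∑ j, |L i (fun k => if j = k then (1:ℝ) else 0)| :=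
    Finset.sum_nonneg fun i _ => Finset.sum_nonneg fun j _ => abs_nonneg _
  have hK1 : 1 ≤ K := by rw [hKdef]; linarith
  have hK0 : 0 ≤ K := by linarith
  have hg : ∀ (i : Fin N) (x : Fin n → ℝ), En x ≤ L i x + K * En x := by
    intro i x
    have hb := clm_bound (L i) x
    have hle : (∑ j, |L i (fun k => if j = k then (1:ℝ) else 0)|) ≤ K - 1 := by
      have h1 : (∑ j, |L i (fun k => if j = k then (1:ℝ) else 0)|)
          ≤ ∑ i', ∑ j, |L i' (fun k => if j = k then (1:ℝ) else 0)| :=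
        Finset.single_le_sum
          (f := fun i' => ∑ j, |L i' (fun k => if j = k then (1:ℝ) else 0)|)
          (fun i' _ => Finset.sum_nonneg fun j _ => abs_nonneg _) (Finset.mem_univ i)
      rw [hKdef]
      linarith
    have h2 : |L i x| ≤ (K - 1) * En x :=
      hb.trans (mul_le_mul_of_nonneg_right hle (En_nonneg x))
    have h3 : -(L i x) ≤ |L i x| := neg_le_abs _
    nlinarith [En_nonneg x]
  -- R bound
  set R : ℝ := (1 + τ) * F x₁ + K with hRdef
  have hRpos : 0 < R := by nlinarith
  have hgR : ∀ (i : Fin N) (x : Fin n → ℝ), L i x + K * En x ≤ R * En x := by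
    intro i x
    have h1 : L i x ≤ (1 + τ) * F x := hLup i x
    have h2 : F x ≤ F x₁ * En x := hMEn x
    have h3 : L i x ≤ (1 + τ) * (F x₁ * En x) :=
      h1.trans (mul_le_mul_of_nonneg_left h2 (by linarith))
    rw [hRdef]
    nlinarith [En_nonneg x]
  -- choose exponent p
  set η : ℝ := τ * c / R with hηdef
  have hηpos : 0 < η := by positivity
  set p : ℝ := max 2 (Real.log N / Real.log (1 + η)) with hpdef
  have hp2 : 2 ≤ p := le_max_left _ _
  have hppos : 0 < p := by linarith
  have hN1 : (1:ℝ) ≤ (N:ℝ) := by exact_mod_cast hNpos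
  have hNp : (N:ℝ) ^ (1/p) ≤ 1 + η := by
    have hlog1 : 0 < Real.log (1 + η) := Real.log_pos (by linarith)
    have hlogN : 0 ≤ Real.log N := Real.log_nonneg hN1
    have hple : Real.log N / Real.log (1 + η) ≤ p := le_max_right _ _
    have h1 : Real.log N ≤ p * Real.log (1 + η) := by
      rw [div_le_iff₀ hlog1] at hple
      linarith
    rw [Real.rpow_def_of_pos (by linarith : (0:ℝ) < (N:ℝ))]
    have h2 : Real.log N * (1/p) ≤ Real.log (1 + η) := by
      rw [mul_one_div, div_le_iff₀ hppos]
      nlinarith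
    calc Real.exp (Real.log N * (1/p)) ≤ Real.exp (Real.log (1 + η)) := Real.exp_le_exp.2 h2
      _ = 1 + η := Real.exp_log (by linarith)
  have hNp1 : 1 ≤ (N:ℝ) ^ (1/p) := Real.one_le_rpow hN1 (by positivity)
  -- H and its properties
  set H : (Fin n → ℝ) → ℝ := Hf L K p with hHdef
  have Htri : ∀ x y, H (x + y) ≤ H x + H y := fun x y => Hf_tri hNpos hp2 hK0 hg x y
  have Hsmul : ∀ (x : Fin n → ℝ) {cc : ℝ}, 0 < cc → H (cc • x) = cc * H x :=
    fun x {cc} hcc => Hf_smul hp2 hg x hcc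
  have Hlow : ∀ x, F x ≤ H x := by
    intro x
    obtain ⟨i, hi⟩ := hLlow x
    exact hi.trans (Hf_lower hp2 hg i x)
  have Hnn : ∀ x, 0 ≤ H x := fun x => (hFnn x).trans (Hlow x)
  have Hup : ∀ x, H x ≤ (1 + 2*τ) * F x := by
    intro x
    obtain ⟨j, hj⟩ := Hf_upper hNpos hp2 hK0 hg x
    have h1 : L j x ≤ (1 + τ) * F x := hLup j x
    have h2 : ((N:ℝ)^(1/p) - 1) * (L j x + K * En x) ≤ η * (R * En x) :=
      mul_le_mul (by linarith) (hgR j x) (g_nonneg hg j x) hηpos.le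
    have h3 : η * (R * En x) = τ * (c * En x) := by
      rw [hηdef]
      field_simp
    have h4 : c * En x ≤ F x := hcEn x
    have h5 : τ * (c * En x) ≤ τ * F x := mul_le_mul_of_nonneg_left h4 hτ.le
    calc H x ≤ L j x + ((N:ℝ)^(1/p) - 1) * (L j x + K * En x) := hj
      _ ≤ (1 + τ) * F x + τ * F x := by
          rw [h3] at h2
          linarith
      _ = (1 + 2*τ) * F x := by ring
  -- δ and G
  set δ : ℝ := (τ * c)^2 with hδdef
  have hδpos : 0 < δ := by positivity
  set G : (Fin n → ℝ) → ℝ := fun x => Real.sqrt (H x ^ 2 + δ * Qf x) with hGdef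
  have hInner_nonneg : ∀ x, 0 ≤ H x ^ 2 + δ * Qf x := fun x =>
    add_nonneg (sq_nonneg _) (mul_nonneg hδpos.le (Qf_nonneg x))
  have hGx : ∀ x, G x = Real.sqrt (H x ^ 2 + δ * Qf x) := fun x => rfl
  have hGsq : ∀ x, G x ^ 2 = H x ^ 2 + δ * Qf x := fun x => Real.sq_sqrt (hInner_nonneg x)
  have hGlow : ∀ x, H x ≤ G x := by
    intro x
    have h1 : H x = Real.sqrt (H x ^ 2) := (Real.sqrt_sq (Hnn x)).symm
    rw [h1, hGx x]
    apply Real.sqrt_le_sqrt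
    nlinarith [mul_nonneg hδpos.le (Qf_nonneg x)]
  have hGup : ∀ x, G x ≤ H x + (τ * c) * En x := by
    intro x
    have hkey : H x ^ 2 + δ * Qf x ≤ (H x + (τ * c) * En x)^2 := by
      rw [← En_sq x]
      have := mul_nonneg (mul_nonneg hτ.le hc.le) (En_nonneg x)
      nlinarith [Hnn x, En_nonneg x]
    rw [hGx x]
    calc Real.sqrt (H x ^ 2 + δ * Qf x) ≤ Real.sqrt ((H x + (τ * c) * En x)^2) :=
          Real.sqrt_le_sqrt hkey
      _ = H x + (τ * c) * En x := Real.sqrt_sq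
          (add_nonneg (Hnn x) (mul_nonneg (mul_nonneg hτ.le hc.le) (En_nonneg x)))
  have hsandwich : ∀ x, F x ≤ G x ∧ G x ≤ (1 + ε) * F x := by
    intro x
    refine ⟨(Hlow x).trans (hGlow x), ?_⟩
    have h1 := hGup x
    have h2 := Hup x
    have h3 : (τ * c) * En x ≤ τ * F x := by
      have h4 := hcEn x
      nlinarith [En_nonneg x]
    have h5 : G x ≤ (1 + 3*τ) * F x := by nlinarith [hFnn x]
    have h6 : (1 + 3*τ) * F x ≤ (1 + ε) * F x := by
      apply mul_le_mul_of_nonneg_right _ (hFnn x)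
      rw [hτdef]
      linarith
    linarith
  have hGhom : ∀ (x : Fin n → ℝ) (cc : ℝ), 0 < cc → G (cc • x) = cc * G x := by
    intro x cc hcc
    rw [hGx (cc • x), hGx x, Hsmul x hcc, Qf_smul]
    rw [show (cc * H x)^2 + δ * (cc^2 * Qf x) = cc^2 * (H x^2 + δ * Qf x) by ring,
      Real.sqrt_mul (sq_nonneg cc), Real.sqrt_sq hcc.le]
  have hGtri : ∀ x y, G (x + y) ≤ G x + G y := by
    intro x y
    have e1 : H (x+y)^2 ≤ (H x + H y)^2 := pow_le_pow_left₀ (Hnn _) (Htri x y) 2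
    have e2 : En (x+y)^2 ≤ (En x + En y)^2 := pow_le_pow_left₀ (En_nonneg _) (En_tri x y) 2
    have h1 : G (x+y) ≤ Real.sqrt ((H x + H y)^2 + δ * (En x + En y)^2) := by
      rw [hGx (x+y)]
      apply Real.sqrt_le_sqrt
      rw [← En_sq (x+y)]
      nlinarith [hδpos.le]
    apply h1.trans
    have h2 := sqrt2D hδpos.le (Hnn x) (Hnn y) (En_nonneg x) (En_nonneg y)
    rw [hGx x, hGx y, ← En_sq x, ← En_sq y]
    exact h2
  have hGconv : ConvexOn ℝ Set.univ G := sublinear_convexOn hGhom hGtri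
  have hHcd : ∀ (m : WithTop ℕ∞) (x : Fin n → ℝ), x ≠ 0 → ContDiffAt ℝ m H x :=
    fun m x hx => Hf_contDiffAt hNpos hp2 hK0 hg hx
  have hInner_pos : ∀ x : Fin n → ℝ, x ≠ 0 → 0 < H x ^ 2 + δ * Qf x := fun x hx =>
    add_pos_of_nonneg_of_pos (sq_nonneg _) (mul_pos hδpos (Qf_pos hx))
  have hGsmooth : ContDiffOn ℝ (⊤ : ℕ∞) G {(0 : Fin n → ℝ)}ᶜ := by
    intro x hx
    have hx0 : x ≠ 0 := hx
    have hin : ContDiffAt ℝ (⊤ : ℕ∞) (fun y => H y ^ 2 + δ * Qf y) x :=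
      ((hHcd (⊤ : ℕ∞) x hx0).pow 2).add (contDiffAt_const.mul Qf_contDiff.contDiffAt)
    exact (hin.sqrt (ne_of_gt (hInner_pos x hx0))).contDiffWithinAt
  refine ⟨G, hGsmooth, hGhom, hsandwich, hGconv, ?_⟩
  intro x hx v hv
  have hfeq : (fun y => G y ^ 2) = (fun y => H y ^ 2 + δ * Qf y) := funext fun y => hGsq y
  rw [hfeq, iteratedFDeriv_two_apply]
  simp only [Matrix.cons_val_zero, Matrix.cons_val_one, Matrix.head_cons]
  have hΨcd : ContDiffAt ℝ 2 (fun y => H y ^ 2) x := (hHcd 2 x hx).pow 2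
  have hΨd' : DifferentiableAt ℝ (fderiv ℝ (fun y => H y ^ 2)) x := by
    have h := hΨcd.fderiv_right (m := 1) (by norm_num)
    exact h.differentiableAt one_ne_zero
  have hopen : {(0 : Fin n → ℝ)}ᶜ ∈ nhds x := isOpen_compl_singleton.mem_nhds hx
  have hΨev : ∀ᶠ y in nhds x, DifferentiableAt ℝ (fun y => H y ^ 2) y := by
    filter_upwards [hopen] with y hy
    exact (((hHcd 2 y hy).pow 2)).differentiableAt (by norm_num)
  have hΨconv : ConvexOn ℝ Set.univ (fun y => H y ^ 2) :=
    convexOn_sq_of (sublinear_convexOn (fun x cc hcc => Hsmul x hcc) Htri) Hnn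
  have hBΨ : 0 ≤ fderiv ℝ (fderiv ℝ (fun y => H y ^ 2)) x v v := conv2 hΨconv hΨev hΨd'
  have hQd : ∀ y : Fin n → ℝ, DifferentiableAt ℝ (Qf (n := n)) y := fun y =>
    (Qf_hasFDerivAt y).differentiableAt
  have hsplit : fderiv ℝ (fun y => H y ^ 2 + δ * Qf y)
      =ᶠ[nhds x] fun y => fderiv ℝ (fun y => H y ^ 2) y + δ • fderiv ℝ (Qf (n := n)) y := by
    filter_upwards [hopen] with y hy
    have hd1 : DifferentiableAt ℝ (fun y => H y ^ 2) y :=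
      ((hHcd 2 y hy).pow 2).differentiableAt (by norm_num)
    have hd2 : DifferentiableAt ℝ (fun z => δ * Qf z) y := (hQd y).const_mul δ
    rw [fderiv_fun_add hd1 hd2, fderiv_const_mul (hQd y) δ]
  have hBeq : fderiv ℝ (fderiv ℝ (fun y => H y ^ 2 + δ * Qf y)) x
      = fderiv ℝ (fderiv ℝ (fun y => H y ^ 2)) x + δ • fderiv ℝ (fderiv ℝ (Qf (n := n))) x := by
    rw [hsplit.fderiv_eq]
    rw [fderiv_fun_add (g := fun y => δ • fderiv ℝ (Qf (n := n)) y) hΨd' ((Qf_fderiv_diffAt x).const_smul δ),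
      fderiv_fun_const_smul (Qf_fderiv_diffAt x) δ]
  rw [hBeq]
  simp only [ContinuousLinearMap.add_apply, ContinuousLinearMap.smul_apply, smul_eq_mul]
  rw [Qf_second x v]
  have hQv : 0 < Qf v := Qf_pos hv
  rw [show (2 : ℝ) * Qf v = 2 * Qf v from rfl] at *
  nlinarith [hBΨ, hδpos, hQv]
end
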